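/- arXiv:1605.01816 — 5 statements merged into one kernel-verified Lean document; each statement's English description precedes it below -/
import Mathlib

section
/- Every linear 3-uniform hypergraph H has a feedback vertex set (a set of vertices intersecting every cycle of H) of cardinality at most m/3, where m is the number of edges of H. -/
/-- A cycle of length `k ≥ 2` in the hypergraph with edge set `E`:
an alternating sequence of distinct vertices and distinct edges with
`{vᵢ, vᵢ₊₁} ⊆ eᵢ` (indices mod `k`). -/
structure HCycle {α : Type*} (E : Finset (Finset α)) where
  k : ℕ
  two_le : 2 ≤ k
  vtx : ZMod k → α
  edg : ZMod k → Finset α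
  vtx_inj : Function.Injective vtx
  edg_inj : Function.Injective edg
  edg_mem : ∀ i, edg i ∈ E
  vtx_mem : ∀ i, vtx i ∈ edg i
  vtx_succ_mem : ∀ i, vtx (i + 1) ∈ edg i

namespace FVSProof

variable {α : Type*} [DecidableEq α]

/-- degree of a vertex in the hypergraph -/
def hdeg (E : Finset (Finset α)) (x : α) : ℕ := (E.filter fun e => x ∈ e).card

/-- edges disjoint from `S` -/
def filtered (E : Finset (Finset α)) (S : Finset α) : Finset (Finset α) :=
  E.filter fun e => ∀ x ∈ e, x ∉ S

def Good (E : Finset (Finset α)) (S : Finset α) : Prop :=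
  HCycle (filtered E S) → False

lemma mem_filtered {E : Finset (Finset α)} {S : Finset α} {e : Finset α} :
    e ∈ filtered E S ↔ e ∈ E ∧ ∀ x ∈ e, x ∉ S := Finset.mem_filter

lemma filtered_subset (E : Finset (Finset α)) (S : Finset α) : filtered E S ⊆ E :=
  Finset.filter_subset _ _

lemma filtered_mono {E : Finset (Finset α)} {S T : Finset α} (h : S ⊆ T) :
    filtered E T ⊆ filtered E S := by
  intro e he
  rw [mem_filtered] at he ⊢
  exact ⟨he.1, fun x hx hxS => he.2 x hx (h hxS)⟩

lemma hdeg_mono {E E' : Finset (Finset α)} (h : E' ⊆ E) (x : α) : hdeg E' x ≤ hdeg E x :=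
  Finset.card_le_card (Finset.filter_subset_filter _ h)

lemma two_le_hdeg {E : Finset (Finset α)} {e f : Finset α} {x : α}
    (he : e ∈ E) (hf : f ∈ E) (hef : e ≠ f) (hxe : x ∈ e) (hxf : x ∈ f) :
    2 ≤ hdeg E x := by
  have hsub : ({e, f} : Finset (Finset α)) ⊆ E.filter fun g => x ∈ g := by
    intro g hg
    rcases Finset.mem_insert.1 hg with rfl | hg
    · exact Finset.mem_filter.2 ⟨he, hxe⟩
    · rw [Finset.mem_singleton] at hg; subst hg
      exact Finset.mem_filter.2 ⟨hf, hxf⟩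
  calc 2 = ({e, f} : Finset (Finset α)).card := (Finset.card_pair hef).symm
    _ ≤ _ := Finset.card_le_card hsub

/-- if `x` has degree ≤ 2 and lies in distinct edges `e, f` of `E`, those are all its edges -/
lemma filter_pair_eq {E : Finset (Finset α)} {e f : Finset α} {x : α}
    (hd2 : hdeg E x ≤ 2) (he : e ∈ E) (hf : f ∈ E) (hef : e ≠ f) (hxe : x ∈ e) (hxf : x ∈ f) :
    E.filter (fun g => x ∈ g) = {e, f} := by
  have hsub : ({e, f} : Finset (Finset α)) ⊆ E.filter fun g => x ∈ g := by
    intro g hg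
    rcases Finset.mem_insert.1 hg with rfl | hg
    · exact Finset.mem_filter.2 ⟨he, hxe⟩
    · rw [Finset.mem_singleton] at hg; subst hg
      exact Finset.mem_filter.2 ⟨hf, hxf⟩
  have hcard : (E.filter fun g => x ∈ g).card ≤ ({e, f} : Finset (Finset α)).card := by
    rw [Finset.card_pair hef]; exact hd2
  exact (Finset.eq_of_subset_of_card_le hsub hcard).symm

/-- the second edge through a degree-2 vertex -/
lemma partner_exists {E : Finset (Finset α)} {e : Finset α} {x : α}
    (hd2 : hdeg E x ≤ 2) (hdx : 2 ≤ hdeg E x) (he : e ∈ E) (hxe : x ∈ e) :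
    ∃ f, f ∈ E ∧ f ≠ e ∧ x ∈ f ∧ E.filter (fun g => x ∈ g) = {e, f} := by
  have h2 : (E.filter fun g => x ∈ g).card = 2 := le_antisymm hd2 hdx
  obtain ⟨u, v, huv, ht⟩ := Finset.card_eq_two.1 h2
  have heT : e ∈ E.filter fun g => x ∈ g := Finset.mem_filter.2 ⟨he, hxe⟩
  rw [ht] at heT
  rcases Finset.mem_insert.1 heT with rfl | hev
  · have hv : v ∈ E.filter fun g => x ∈ g := by rw [ht]; exact Finset.mem_insert_of_mem (Finset.mem_singleton_self v)
    have hv' := Finset.mem_filter.1 hv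
    exact ⟨v, hv'.1, fun h => huv h.symm, hv'.2, ht⟩
  · rw [Finset.mem_singleton] at hev; subst hev
    have hu : u ∈ E.filter fun g => x ∈ g := by rw [ht]; exact Finset.mem_insert_self u _
    have hu' := Finset.mem_filter.1 hu
    refine ⟨u, hu'.1, fun h => huv h, hu'.2, ?_⟩
    rw [ht, Finset.pair_comm]

/-- if one of the (at most two) edges through x is missing from E', the degree drops to ≤ 1 -/
lemma hdeg_le_one_of {E E' : Finset (Finset α)} {e f : Finset α} {x : α}
    (hpair : E.filter (fun g => x ∈ g) = {e, f}) (hE' : E' ⊆ E) (hfE' : f ∉ E') :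
    hdeg E' x ≤ 1 := by
  have hsub : E'.filter (fun g => x ∈ g) ⊆ {e} := by
    intro g hg
    have hg' : g ∈ E.filter fun g => x ∈ g :=
      Finset.filter_subset_filter _ hE' hg
    rw [hpair] at hg'
    rcases Finset.mem_insert.1 hg' with rfl | hg''
    · exact Finset.mem_singleton_self g
    · rw [Finset.mem_singleton] at hg''; subst hg''
      exact absurd ((Finset.mem_filter.1 hg).1) hfE'
  calc hdeg E' x ≤ ({e} : Finset (Finset α)).card := Finset.card_le_card hsub
    _ = 1 := Finset.card_singleton e

lemma third_unique {r : Finset α} {z₂ z₃ x y : α} (h3 : r.card = 3)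
    (hz2 : z₂ ∈ r) (hz3 : z₃ ∈ r) (hne : z₂ ≠ z₃)
    (hx : x ∈ r) (hy : y ∈ r) (hx2 : x ≠ z₂) (hx3 : x ≠ z₃) (hy2 : y ≠ z₂) (hy3 : y ≠ z₃) :
    x = y := by
  have hz3' : z₃ ∈ r.erase z₂ := Finset.mem_erase.2 ⟨hne.symm, hz3⟩
  have hc : ((r.erase z₂).erase z₃).card = 1 := by
    rw [Finset.card_erase_of_mem hz3', Finset.card_erase_of_mem hz2, h3]
  obtain ⟨w, hw⟩ := Finset.card_eq_one.1 hc
  have hxw : x ∈ (r.erase z₂).erase z₃ := Finset.mem_erase.2 ⟨hx3, Finset.mem_erase.2 ⟨hx2, hx⟩⟩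
  have hyw : y ∈ (r.erase z₂).erase z₃ := Finset.mem_erase.2 ⟨hy3, Finset.mem_erase.2 ⟨hy2, hy⟩⟩
  rw [hw, Finset.mem_singleton] at hxw hyw
  rw [hxw, hyw]

lemma cycle_facts {F : Finset (Finset α)} (C : HCycle F) (i : ZMod C.k) :
    C.vtx i ≠ C.vtx (i + 1) ∧ 2 ≤ hdeg F (C.vtx i) ∧ 2 ≤ hdeg F (C.vtx (i + 1)) := by
  haveI : Fact (1 < C.k) := ⟨C.two_le⟩
  have h10 : (1 : ZMod C.k) ≠ 0 := one_ne_zero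
  have hii : i + 1 ≠ i := fun h => h10 (by rwa [add_eq_left] at h)
  have him : i - 1 ≠ i := fun h => h10 (sub_eq_self.1 h)
  refine ⟨fun h => hii (C.vtx_inj h).symm, ?_, ?_⟩
  · have hm : C.vtx i ∈ C.edg (i - 1) := by
      have := C.vtx_succ_mem (i - 1); rwa [sub_add_cancel] at this
    exact two_le_hdeg (C.edg_mem i) (C.edg_mem (i - 1)) (fun h => him (C.edg_inj h.symm))
      (C.vtx_mem i) hm
  · exact two_le_hdeg (C.edg_mem i) (C.edg_mem (i + 1)) (fun h => hii (C.edg_inj h.symm))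
      (C.vtx_succ_mem i) (C.vtx_mem (i + 1))

/-- The main reduction lemma: delete a set `D` of edges where each deleted edge either meets
the newly picked vertices `S₀`, or has at most one vertex that can still have degree ≥ 2
after picking `S₀`. -/
lemma move {F : Finset (Finset α)} (S₀ S' : Finset α) (D : Finset (Finset α)) (hD : D ⊆ F)
    (hjust : ∀ e ∈ D, (∃ x ∈ e, x ∈ S₀) ∨
      (∀ x ∈ e, ∀ y ∈ e, 2 ≤ hdeg (filtered F S₀) x → 2 ≤ hdeg (filtered F S₀) y → x = y))
    (hgood : Good (F \ D) S') : Good F (S₀ ∪ S') := by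
  intro C
  have hmem : ∀ i, C.edg i ∈ filtered F (S₀ ∪ S') := C.edg_mem
  have hsub1 : filtered F (S₀ ∪ S') ⊆ filtered F S₀ :=
    filtered_mono Finset.subset_union_left
  have hnot : ∀ i, C.edg i ∉ D := by
    intro i hiD
    rcases hjust _ hiD with ⟨x, hxe, hxS⟩ | huniq
    · exact (mem_filtered.1 (hmem i)).2 x hxe (Finset.mem_union_left _ hxS)
    · obtain ⟨hvne, hd1, hd2⟩ := cycle_facts C i
      exact hvne (huniq _ (C.vtx_mem i) _ (C.vtx_succ_mem i)
        (le_trans hd1 (hdeg_mono hsub1 _))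
        (le_trans hd2 (hdeg_mono hsub1 _)))
  refine hgood ⟨C.k, C.two_le, C.vtx, C.edg, C.vtx_inj, C.edg_inj, ?_, C.vtx_mem, C.vtx_succ_mem⟩
  intro i
  have h := mem_filtered.1 (hmem i)
  refine mem_filtered.2 ⟨Finset.mem_sdiff.2 ⟨h.1, hnot i⟩, ?_⟩
  intro x hx hxS'
  exact h.2 x hx (Finset.mem_union_right _ hxS')

/-- Configuration around an edge `e` with exactly two degree-2 vertices (no leaf edges). -/
lemma deg2_config {F : Finset (Finset α)} {e : Finset α}
    (hlin : ∀ a ∈ F, ∀ b ∈ F, a ≠ b → (a ∩ b).card ≤ 1)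
    (hd2 : ∀ x : α, hdeg F x ≤ 2)
    (hnoleaf : ∀ f ∈ F, 2 ≤ (f.filter fun x => 2 ≤ hdeg F x).card)
    (he : e ∈ F) (h2 : (e.filter fun x => 2 ≤ hdeg F x).card = 2) :
    ∃ (y₂ u : α) (a g b : Finset α),
      a ∈ F ∧ g ∈ F ∧ b ∈ F ∧ a ≠ e ∧ g ≠ e ∧ a ≠ g ∧ b ≠ e ∧ b ≠ a ∧
      u ∈ a ∧ u ∈ g ∧ y₂ ∈ e ∧ y₂ ∈ b ∧
      (∀ x ∈ e, 2 ≤ hdeg (filtered F {u}) x → x = y₂) ∧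
      (∀ E' ⊆ F, e ∉ E' → hdeg E' y₂ ≤ 1) ∧
      (b = g → ∃ p, p ∈ F ∧ ∃ q, q ∈ F ∧ ∃ r, r ∈ F ∧ p ≠ q ∧ q ≠ r ∧ p ≠ r ∧
        (p ∩ q).Nonempty ∧ (q ∩ r).Nonempty ∧ (p ∩ r).Nonempty) := by
  obtain ⟨y₁, y₂, hy12, hpair⟩ := Finset.card_eq_two.1 h2
  have hy₁mem : y₁ ∈ e.filter fun x => 2 ≤ hdeg F x := by
    rw [hpair]; exact Finset.mem_insert_self _ _
  have hy₂mem : y₂ ∈ e.filter fun x => 2 ≤ hdeg F x := by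
    rw [hpair]; exact Finset.mem_insert_of_mem (Finset.mem_singleton_self _)
  obtain ⟨hy₁e, hdy₁⟩ := Finset.mem_filter.1 hy₁mem
  obtain ⟨hy₂e, hdy₂⟩ := Finset.mem_filter.1 hy₂mem
  obtain ⟨a, haF, hae, hy₁a, Pa⟩ := partner_exists (hd2 y₁) hdy₁ he hy₁e
  have h1lt : 1 < (a.filter fun x => 2 ≤ hdeg F x).card := lt_of_lt_of_le one_lt_two (hnoleaf a haF)
  obtain ⟨u, humem, huy₁⟩ := Finset.exists_mem_ne h1lt y₁
  obtain ⟨hua, hdu⟩ := Finset.mem_filter.1 humem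
  have hue : u ∉ e := by
    intro hue
    have hsub : ({y₁, u} : Finset α) ⊆ e ∩ a := by
      intro w hw
      rcases Finset.mem_insert.1 hw with rfl | hw
      · exact Finset.mem_inter.2 ⟨hy₁e, hy₁a⟩
      · rw [Finset.mem_singleton] at hw; subst hw
        exact Finset.mem_inter.2 ⟨hue, hua⟩
    have : 2 ≤ (e ∩ a).card := by
      calc 2 = ({y₁, u} : Finset α).card := (Finset.card_pair (Ne.symm huy₁)).symm
        _ ≤ _ := Finset.card_le_card hsub
    have := hlin e he a haF (Ne.symm hae)
    omega
  obtain ⟨g, hgF, hga, hug, Pg⟩ := partner_exists (hd2 u) hdu haF hua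
  have hge : g ≠ e := fun h => hue (h ▸ hug)
  obtain ⟨b, hbF, hbe, hy₂b, Pb⟩ := partner_exists (hd2 y₂) hdy₂ he hy₂e
  have hba : b ≠ a := by
    intro h; subst h
    have hsub : ({y₁, y₂} : Finset α) ⊆ e ∩ b := by
      intro w hw
      rcases Finset.mem_insert.1 hw with rfl | hw
      · exact Finset.mem_inter.2 ⟨hy₁e, hy₁a⟩
      · rw [Finset.mem_singleton] at hw; subst hw
        exact Finset.mem_inter.2 ⟨hy₂e, hy₂b⟩
    have : 2 ≤ (e ∩ b).card := by
      calc 2 = ({y₁, y₂} : Finset α).card := (Finset.card_pair hy12).symm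
        _ ≤ _ := Finset.card_le_card hsub
    have := hlin e he b hbF (Ne.symm hbe)
    omega
  refine ⟨y₂, u, a, g, b, haF, hgF, hbF, hae, hge, Ne.symm hga, hbe, hba,
    hua, hug, hy₂e, hy₂b, ?_, ?_, ?_⟩
  · intro x hx h2x
    have hxF : 2 ≤ hdeg F x := le_trans h2x (hdeg_mono (filtered_subset F {u}) x)
    have hxmem : x ∈ e.filter fun x => 2 ≤ hdeg F x := Finset.mem_filter.2 ⟨hx, hxF⟩
    rw [hpair] at hxmem
    rcases Finset.mem_insert.1 hxmem with rfl | hxmem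
    · exfalso
      have hanot : a ∉ filtered F {u} := fun hmem =>
        (mem_filtered.1 hmem).2 u hua (Finset.mem_singleton_self u)
      have := hdeg_le_one_of Pa (filtered_subset F {u}) hanot
      omega
    · exact Finset.mem_singleton.1 hxmem
  · intro E' hE' heE'
    exact hdeg_le_one_of (Pb.trans (Finset.pair_comm e b)) hE' heE'
  · intro hbg
    refine ⟨e, he, a, haF, b, hbF, Ne.symm hae, Ne.symm hba, Ne.symm hbe,
      ⟨y₁, Finset.mem_inter.2 ⟨hy₁e, hy₁a⟩⟩, ⟨u, Finset.mem_inter.2 ⟨hua, hbg ▸ hug⟩⟩,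
      ⟨y₂, Finset.mem_inter.2 ⟨hy₂e, hy₂b⟩⟩⟩
lemma good_of_empty (S : Finset α) : Good (∅ : Finset (Finset α)) S := by
  intro C
  have h := C.edg_mem 0
  rw [mem_filtered] at h
  exact Finset.notMem_empty _ h.1

lemma card_triple {a g e : Finset α} (hag : a ≠ g) (hae : a ≠ e) (hge : g ≠ e) :
    ({a, g, e} : Finset (Finset α)).card = 3 := by
  have h1 : a ∉ ({g, e} : Finset (Finset α)) := by simp [hag, hae]
  have h2 : g ∉ ({e} : Finset (Finset α)) := by simp [hge]
  rw [Finset.card_insert_of_notMem h1, Finset.card_insert_of_notMem h2, Finset.card_singleton]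

lemma weak_of_deg_drop {E' : Finset (Finset α)} {b : Finset α} {y : α}
    (hb3 : b.card = 3) (hyb : y ∈ b) (hdy : hdeg E' y ≤ 1) :
    (b.filter fun x => 2 ≤ hdeg E' x).card ≤ 2 := by
  have hsub : (b.filter fun x => 2 ≤ hdeg E' x) ⊆ b.erase y := by
    intro x hx
    obtain ⟨hxb, h2x⟩ := Finset.mem_filter.1 hx
    refine Finset.mem_erase.2 ⟨?_, hxb⟩
    intro h; subst h; omega
  calc (b.filter fun x => 2 ≤ hdeg E' x).card ≤ (b.erase y).card := Finset.card_le_card hsub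
    _ = 2 := by rw [Finset.card_erase_of_mem hyb, hb3]

lemma leaf_move {F : Finset (Finset α)} {e : Finset α} {S' : Finset α}
    (he : e ∈ F) (hle : (e.filter fun x => 2 ≤ hdeg F x).card ≤ 1)
    (hg' : Good (F.erase e) S') : Good F S' := by
  have hgood : Good F (∅ ∪ S') := by
    refine move ∅ S' {e} (Finset.singleton_subset_iff.2 he) ?_ ?_
    · intro f hf
      rw [Finset.mem_singleton] at hf
      right
      intro x hx y hy h2x h2y
      rw [hf] at hx hy
      have hx' : x ∈ e.filter fun x => 2 ≤ hdeg F x :=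
        Finset.mem_filter.2 ⟨hx, le_trans h2x (hdeg_mono (filtered_subset F ∅) x)⟩
      have hy' : y ∈ e.filter fun x => 2 ≤ hdeg F x :=
        Finset.mem_filter.2 ⟨hy, le_trans h2y (hdeg_mono (filtered_subset F ∅) y)⟩
      exact Finset.card_le_one.1 hle x hx' y hy'
    · rwa [← Finset.erase_eq]
  rwa [Finset.empty_union] at hgood

lemma deg2_move {F : Finset (Finset α)} {e a g : Finset α} {y₂ u : α} {S' : Finset α}
    (haF : a ∈ F) (hgF : g ∈ F) (heF : e ∈ F)
    (hua : u ∈ a) (hug : u ∈ g)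
    (hjust_e : ∀ x ∈ e, 2 ≤ hdeg (filtered F {u}) x → x = y₂)
    (hg' : Good (F \ {a, g, e}) S') : Good F (insert u S') := by
  rw [Finset.insert_eq]
  refine move {u} S' {a, g, e} ?_ ?_ hg'
  · intro f hf
    rcases Finset.mem_insert.1 hf with rfl | hf
    · exact haF
    rcases Finset.mem_insert.1 hf with rfl | hf
    · exact hgF
    · rw [Finset.mem_singleton] at hf; subst hf; exact heF
  · intro f hf
    rcases Finset.mem_insert.1 hf with rfl | hf
    · exact Or.inl ⟨u, hua, Finset.mem_singleton_self u⟩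
    rcases Finset.mem_insert.1 hf with rfl | hf
    · exact Or.inl ⟨u, hug, Finset.mem_singleton_self u⟩
    · rw [Finset.mem_singleton] at hf; subst hf
      exact Or.inr fun x hx y hy h2x h2y => (hjust_e x hx h2x).trans (hjust_e y hy h2y).symm
theorem main_all (F : Finset (Finset α)) :
    ((∀ a ∈ F, ∀ b ∈ F, a ≠ b → (a ∩ b).card ≤ 1) → (∀ e ∈ F, e.card = 3) →
      (∀ x : α, hdeg F x ≤ 2) →
      ∃ S : Finset α, Good F S ∧ 3 * S.card ≤ F.card) ∧
    ((∀ a ∈ F, ∀ b ∈ F, a ≠ b → (a ∩ b).card ≤ 1) → (∀ e ∈ F, e.card = 3) →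
      (∀ x : α, hdeg F x ≤ 2) →
      (¬ ∃ p, p ∈ F ∧ ∃ q, q ∈ F ∧ ∃ r, r ∈ F ∧ p ≠ q ∧ q ≠ r ∧ p ≠ r ∧
          (p ∩ q).Nonempty ∧ (q ∩ r).Nonempty ∧ (p ∩ r).Nonempty) →
      (∃ e ∈ F, (e.filter fun x => 2 ≤ hdeg F x).card ≤ 2) →
      ∃ S : Finset α, Good F S ∧ 3 * S.card + 1 ≤ F.card) := by
  induction F using Finset.strongInduction with
  | _ F IH =>
  constructor
  · -- ============ non-strict statement ============
    intro hlin h3 hd2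
    by_cases hleaf : ∃ e ∈ F, (e.filter fun x => 2 ≤ hdeg F x).card ≤ 1
    · -- a leaf edge : delete it for free
      obtain ⟨e, he, hle⟩ := hleaf
      have hsub : F.erase e ⊆ F := Finset.erase_subset e F
      obtain ⟨S', hg', hb'⟩ := (IH _ (Finset.erase_ssubset he)).1
        (fun p hp q hq => hlin p (hsub hp) q (hsub hq))
        (fun f hf => h3 f (hsub hf))
        (fun x => le_trans (hdeg_mono hsub x) (hd2 x))
      refine ⟨S', leaf_move he hle hg', ?_⟩
      have hc := Finset.card_erase_of_mem he
      have hpos : 0 < F.card := Finset.card_pos.2 ⟨e, he⟩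
      omega
    · by_cases h2e : ∃ e ∈ F, (e.filter fun x => 2 ≤ hdeg F x).card = 2
      · -- an edge with exactly two degree-2 vertices
        obtain ⟨e, he, h2⟩ := h2e
        have hnoleaf : ∀ f ∈ F, 2 ≤ (f.filter fun x => 2 ≤ hdeg F x).card := by
          intro f hf
          by_contra hcon
          exact hleaf ⟨f, hf, by omega⟩
        obtain ⟨y₂, u, a, g, b, haF, hgF, hbF, hae, hge, hag, hbe, hba, hua, hug,
          hy₂e, hy₂b, hjust_e, hy₂deg, -⟩ := deg2_config hlin hd2 hnoleaf he h2
        have hDsub : ({a, g, e} : Finset (Finset α)) ⊆ F := by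
          intro f hf
          rcases Finset.mem_insert.1 hf with rfl | hf
          · exact haF
          rcases Finset.mem_insert.1 hf with rfl | hf
          · exact hgF
          · rw [Finset.mem_singleton] at hf; rw [hf]; exact he
        have hss : F \ {a, g, e} ⊂ F :=
          Finset.sdiff_ssubset hDsub ⟨a, Finset.mem_insert_self _ _⟩
        have hsub : F \ ({a, g, e} : Finset (Finset α)) ⊆ F := Finset.sdiff_subset
        obtain ⟨S', hg', hb'⟩ := (IH _ hss).1
          (fun p hp q hq => hlin p (hsub hp) q (hsub hq))
          (fun f hf => h3 f (hsub hf))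
          (fun x => le_trans (hdeg_mono hsub x) (hd2 x))
        refine ⟨insert u S', deg2_move haF hgF he hua hug hjust_e hg', ?_⟩
        have hc := Finset.card_sdiff_of_subset hDsub
        have hD3 := card_triple hag hae hge
        have hle3 := Finset.card_le_card hDsub
        have hci := Finset.card_insert_le u S'
        omega
      · -- every edge has three degree-2 vertices ("3-regular" case)
        by_cases hF0 : F = ∅
        · subst hF0
          exact ⟨∅, good_of_empty ∅, by simp⟩
        · have hall3 : ∀ f ∈ F, (f.filter fun x => 2 ≤ hdeg F x).card = 3 := by
            intro f hf
            have h1 : 2 ≤ (f.filter fun x => 2 ≤ hdeg F x).card := by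
              by_contra hcon
              exact hleaf ⟨f, hf, by omega⟩
            have hne2 : (f.filter fun x => 2 ≤ hdeg F x).card ≠ 2 := fun h => h2e ⟨f, hf, h⟩
            have hle3 : (f.filter fun x => 2 ≤ hdeg F x).card ≤ 3 := by
              calc (f.filter fun x => 2 ≤ hdeg F x).card ≤ f.card :=
                    Finset.card_le_card (Finset.filter_subset _ _)
                _ = 3 := h3 f hf
            omega
          by_cases htri : ∃ p, p ∈ F ∧ ∃ q, q ∈ F ∧ ∃ r, r ∈ F ∧ p ≠ q ∧ q ≠ r ∧ p ≠ r ∧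
              (p ∩ q).Nonempty ∧ (q ∩ r).Nonempty ∧ (p ∩ r).Nonempty
          · -- triangle
            obtain ⟨p, hpF, q, hqF, r, hrF, hpq, hqr, hpr, ⟨z₁, hz₁⟩, ⟨z₂, hz₂⟩, ⟨z₃, hz₃⟩⟩ := htri
            obtain ⟨hz₁p, hz₁q⟩ := Finset.mem_inter.1 hz₁
            obtain ⟨hz₂q, hz₂r⟩ := Finset.mem_inter.1 hz₂
            obtain ⟨hz₃p, hz₃r⟩ := Finset.mem_inter.1 hz₃
            have hz23 : z₂ ≠ z₃ := by
              intro h; subst h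
              have hsub3 : ({p, q, r} : Finset (Finset α)) ⊆ F.filter fun f => z₂ ∈ f := by
                intro f hf
                rcases Finset.mem_insert.1 hf with rfl | hf
                · exact Finset.mem_filter.2 ⟨hpF, hz₃p⟩
                rcases Finset.mem_insert.1 hf with rfl | hf
                · exact Finset.mem_filter.2 ⟨hqF, hz₂q⟩
                · rw [Finset.mem_singleton] at hf; rw [hf]
                  exact Finset.mem_filter.2 ⟨hrF, hz₂r⟩
              have h33 : 3 ≤ hdeg F z₂ := by
                calc 3 = ({p, q, r} : Finset (Finset α)).card := (card_triple hpq hpr hqr).symm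
                  _ ≤ _ := Finset.card_le_card hsub3
              have := hd2 z₂
              omega
            have Pz₂ := filter_pair_eq (hd2 z₂) hqF hrF hqr hz₂q hz₂r
            have Pz₃ := filter_pair_eq (hd2 z₃) hpF hrF hpr hz₃p hz₃r
            have hq_not : q ∉ filtered F {z₁} := fun hmem =>
              (mem_filtered.1 hmem).2 z₁ hz₁q (Finset.mem_singleton_self _)
            have hp_not : p ∉ filtered F {z₁} := fun hmem =>
              (mem_filtered.1 hmem).2 z₁ hz₁p (Finset.mem_singleton_self _)
            have hdz₂ : hdeg (filtered F {z₁}) z₂ ≤ 1 :=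
              hdeg_le_one_of (Pz₂.trans (Finset.pair_comm q r)) (filtered_subset _ _) hq_not
            have hdz₃ : hdeg (filtered F {z₁}) z₃ ≤ 1 :=
              hdeg_le_one_of (Pz₃.trans (Finset.pair_comm p r)) (filtered_subset _ _) hp_not
            have hDsub : ({p, q, r} : Finset (Finset α)) ⊆ F := by
              intro f hf
              rcases Finset.mem_insert.1 hf with rfl | hf
              · exact hpF
              rcases Finset.mem_insert.1 hf with rfl | hf
              · exact hqF
              · rw [Finset.mem_singleton] at hf; rw [hf]; exact hrF
            have hss : F \ {p, q, r} ⊂ F :=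
              Finset.sdiff_ssubset hDsub ⟨p, Finset.mem_insert_self _ _⟩
            have hsub : F \ ({p, q, r} : Finset (Finset α)) ⊆ F := Finset.sdiff_subset
            obtain ⟨S', hg', hb'⟩ := (IH _ hss).1
              (fun w hw v hv => hlin w (hsub hw) v (hsub hv))
              (fun f hf => h3 f (hsub hf))
              (fun x => le_trans (hdeg_mono hsub x) (hd2 x))
            refine ⟨insert z₁ S', ?_, ?_⟩
            · rw [Finset.insert_eq]
              refine move {z₁} S' {p, q, r} hDsub ?_ hg'
              intro f hf
              rcases Finset.mem_insert.1 hf with rfl | hf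
              · exact Or.inl ⟨z₁, hz₁p, Finset.mem_singleton_self _⟩
              rcases Finset.mem_insert.1 hf with rfl | hf
              · exact Or.inl ⟨z₁, hz₁q, Finset.mem_singleton_self _⟩
              · rw [Finset.mem_singleton] at hf
                right
                intro x hx y hy h2x h2y
                rw [hf] at hx hy
                have hxz₂ : x ≠ z₂ := by intro h; subst h; omega
                have hxz₃ : x ≠ z₃ := by intro h; subst h; omega
                have hyz₂ : y ≠ z₂ := by intro h; subst h; omega
                have hyz₃ : y ≠ z₃ := by intro h; subst h; omega
                exact third_unique (h3 r hrF) hz₂r hz₃r hz23 hx hy hxz₂ hxz₃ hyz₂ hyz₃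
            · have hc := Finset.card_sdiff_of_subset hDsub
              have hD3 := card_triple hpq hpr hqr
              have hle3 := Finset.card_le_card hDsub
              have hci := Finset.card_insert_le z₁ S'
              omega
          · -- triangle-free 3-regular : delete two adjacent edges, recurse strictly
            obtain ⟨p, hpF⟩ := Finset.nonempty_iff_ne_empty.2 hF0
            have hsh := hall3 p hpF
            obtain ⟨z, hz⟩ := Finset.card_pos.1 (by omega :
              0 < (p.filter fun x => 2 ≤ hdeg F x).card)
            obtain ⟨hzp, hdz⟩ := Finset.mem_filter.1 hz
            obtain ⟨q, hqF, hqp, hzq, Pz⟩ := partner_exists (hd2 z) hdz hpF hzp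
            obtain ⟨s₁, hs₁mem, hs₁z⟩ := Finset.exists_mem_ne (by omega :
              1 < (p.filter fun x => 2 ≤ hdeg F x).card) z
            obtain ⟨hs₁p, hds₁⟩ := Finset.mem_filter.1 hs₁mem
            obtain ⟨a₁, ha₁F, ha₁p, hs₁a₁, Ps₁⟩ := partner_exists (hd2 s₁) hds₁ hpF hs₁p
            have ha₁q : a₁ ≠ q := by
              intro h; subst h
              have hsubzq : ({z, s₁} : Finset α) ⊆ p ∩ a₁ := by
                intro w hw
                rcases Finset.mem_insert.1 hw with rfl | hw
                · exact Finset.mem_inter.2 ⟨hzp, hzq⟩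
                · rw [Finset.mem_singleton] at hw; rw [hw]
                  exact Finset.mem_inter.2 ⟨hs₁p, hs₁a₁⟩
              have h2c : 2 ≤ (p ∩ a₁).card := by
                calc 2 = ({z, s₁} : Finset α).card := (Finset.card_pair (Ne.symm hs₁z)).symm
                  _ ≤ _ := Finset.card_le_card hsubzq
              have := hlin p hpF a₁ ha₁F (Ne.symm ha₁p)
              omega
            have hpqsub : ({p, q} : Finset (Finset α)) ⊆ F := by
              intro f hf
              rcases Finset.mem_insert.1 hf with rfl | hf
              · exact hpF
              · rw [Finset.mem_singleton] at hf; rw [hf]; exact hqF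
            have hss : F \ {p, q} ⊂ F :=
              Finset.sdiff_ssubset hpqsub ⟨p, Finset.mem_insert_self _ _⟩
            have hsub : F \ ({p, q} : Finset (Finset α)) ⊆ F := Finset.sdiff_subset
            have hp_not : p ∉ F \ ({p, q} : Finset (Finset α)) := by
              intro hmem
              exact (Finset.mem_sdiff.1 hmem).2 (Finset.mem_insert_self _ _)
            have ha₁E' : a₁ ∈ F \ ({p, q} : Finset (Finset α)) := by
              refine Finset.mem_sdiff.2 ⟨ha₁F, ?_⟩
              intro hmem
              rcases Finset.mem_insert.1 hmem with h | h
              · exact ha₁p h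
              · rw [Finset.mem_singleton] at h; exact ha₁q h
            have hds₁' : hdeg (F \ ({p, q} : Finset (Finset α))) s₁ ≤ 1 :=
              hdeg_le_one_of (Ps₁.trans (Finset.pair_comm p a₁)) hsub hp_not
            have hweak' := weak_of_deg_drop (h3 a₁ ha₁F) hs₁a₁ hds₁'
            have htf' : ¬ ∃ p', p' ∈ F \ ({p, q} : Finset (Finset α)) ∧
                ∃ q', q' ∈ F \ ({p, q} : Finset (Finset α)) ∧
                ∃ r', r' ∈ F \ ({p, q} : Finset (Finset α)) ∧ p' ≠ q' ∧ q' ≠ r' ∧ p' ≠ r' ∧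
                (p' ∩ q').Nonempty ∧ (q' ∩ r').Nonempty ∧ (p' ∩ r').Nonempty := by
              rintro ⟨p', hp', q', hq', r', hr', h1, h2', h3', h4, h5, h6⟩
              exact htri ⟨p', hsub hp', q', hsub hq', r', hsub hr', h1, h2', h3', h4, h5, h6⟩
            obtain ⟨S', hg', hb'⟩ := (IH _ hss).2
              (fun w hw v hv => hlin w (hsub hw) v (hsub hv))
              (fun f hf => h3 f (hsub hf))
              (fun x => le_trans (hdeg_mono hsub x) (hd2 x))
              htf' ⟨a₁, ha₁E', hweak'⟩
            refine ⟨insert z S', ?_, ?_⟩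
            · rw [Finset.insert_eq]
              refine move {z} S' {p, q} hpqsub ?_ hg'
              intro f hf
              rcases Finset.mem_insert.1 hf with rfl | hf
              · exact Or.inl ⟨z, hzp, Finset.mem_singleton_self _⟩
              · rw [Finset.mem_singleton] at hf
                left
                exact ⟨z, by rw [hf]; exact hzq, Finset.mem_singleton_self _⟩
            · have hc := Finset.card_sdiff_of_subset hpqsub
              have h2' : ({p, q} : Finset (Finset α)).card = 2 := Finset.card_pair (Ne.symm hqp)
              have hle' := Finset.card_le_card hpqsub
              have hci := Finset.card_insert_le z S'
              omega
  · -- ============ strict statement ============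
    intro hlin h3 hd2 htf hweak
    by_cases hleaf : ∃ e ∈ F, (e.filter fun x => 2 ≤ hdeg F x).card ≤ 1
    · obtain ⟨e, he, hle⟩ := hleaf
      have hsub : F.erase e ⊆ F := Finset.erase_subset e F
      have hlin' : ∀ w ∈ F.erase e, ∀ v ∈ F.erase e, w ≠ v → (w ∩ v).card ≤ 1 :=
        fun w hw v hv => hlin w (hsub hw) v (hsub hv)
      have h3' : ∀ f ∈ F.erase e, f.card = 3 := fun f hf => h3 f (hsub hf)
      have hd2' : ∀ x : α, hdeg (F.erase e) x ≤ 2 :=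
        fun x => le_trans (hdeg_mono hsub x) (hd2 x)
      have hc := Finset.card_erase_of_mem he
      have hpos : 0 < F.card := Finset.card_pos.2 ⟨e, he⟩
      by_cases hw' : ∃ f ∈ F.erase e, (f.filter fun x => 2 ≤ hdeg (F.erase e) x).card ≤ 2
      · have htf' : ¬ ∃ p', p' ∈ F.erase e ∧ ∃ q', q' ∈ F.erase e ∧
            ∃ r', r' ∈ F.erase e ∧ p' ≠ q' ∧ q' ≠ r' ∧ p' ≠ r' ∧
            (p' ∩ q').Nonempty ∧ (q' ∩ r').Nonempty ∧ (p' ∩ r').Nonempty := by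
          rintro ⟨p', hp', q', hq', r', hr', h1, h2', h3x, h4, h5, h6⟩
          exact htf ⟨p', hsub hp', q', hsub hq', r', hsub hr', h1, h2', h3x, h4, h5, h6⟩
        obtain ⟨S', hg', hb'⟩ := (IH _ (Finset.erase_ssubset he)).2 hlin' h3' hd2' htf' hw'
        refine ⟨S', leaf_move he hle hg', ?_⟩
        omega
      · obtain ⟨S', hg', hb'⟩ := (IH _ (Finset.erase_ssubset he)).1 hlin' h3' hd2'
        refine ⟨S', leaf_move he hle hg', ?_⟩
        omega
    · obtain ⟨e, he, hw2⟩ := hweak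
      have hnoleaf : ∀ f ∈ F, 2 ≤ (f.filter fun x => 2 ≤ hdeg F x).card := by
        intro f hf
        by_contra hcon
        exact hleaf ⟨f, hf, by omega⟩
      have h2 : (e.filter fun x => 2 ≤ hdeg F x).card = 2 := le_antisymm hw2 (hnoleaf e he)
      obtain ⟨y₂, u, a, g, b, haF, hgF, hbF, hae, hge, hag, hbe, hba, hua, hug,
        hy₂e, hy₂b, hjust_e, hy₂deg, htrib⟩ := deg2_config hlin hd2 hnoleaf he h2
      have hbg : b ≠ g := fun h => htf (htrib h)
      have hDsub : ({a, g, e} : Finset (Finset α)) ⊆ F := by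
        intro f hf
        rcases Finset.mem_insert.1 hf with rfl | hf
        · exact haF
        rcases Finset.mem_insert.1 hf with rfl | hf
        · exact hgF
        · rw [Finset.mem_singleton] at hf; rw [hf]; exact he
      have hss : F \ {a, g, e} ⊂ F :=
        Finset.sdiff_ssubset hDsub ⟨a, Finset.mem_insert_self _ _⟩
      have hsub : F \ ({a, g, e} : Finset (Finset α)) ⊆ F := Finset.sdiff_subset
      have hbE' : b ∈ F \ ({a, g, e} : Finset (Finset α)) := by
        refine Finset.mem_sdiff.2 ⟨hbF, ?_⟩
        intro hmem
        rcases Finset.mem_insert.1 hmem with h | hmem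
        · exact hba h
        rcases Finset.mem_insert.1 hmem with h | hmem
        · exact hbg h
        · rw [Finset.mem_singleton] at hmem; exact hbe hmem
      have heE' : e ∉ F \ ({a, g, e} : Finset (Finset α)) := by
        intro hmem
        exact (Finset.mem_sdiff.1 hmem).2
          (Finset.mem_insert_of_mem (Finset.mem_insert_of_mem (Finset.mem_singleton_self _)))
      have hdy₂' : hdeg (F \ ({a, g, e} : Finset (Finset α))) y₂ ≤ 1 := hy₂deg _ hsub heE'
      have hweak' := weak_of_deg_drop (h3 b hbF) hy₂b hdy₂'
      have htf' : ¬ ∃ p', p' ∈ F \ ({a, g, e} : Finset (Finset α)) ∧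
          ∃ q', q' ∈ F \ ({a, g, e} : Finset (Finset α)) ∧
          ∃ r', r' ∈ F \ ({a, g, e} : Finset (Finset α)) ∧ p' ≠ q' ∧ q' ≠ r' ∧ p' ≠ r' ∧
          (p' ∩ q').Nonempty ∧ (q' ∩ r').Nonempty ∧ (p' ∩ r').Nonempty := by
        rintro ⟨p', hp', q', hq', r', hr', h1, h2', h3x, h4, h5, h6⟩
        exact htf ⟨p', hsub hp', q', hsub hq', r', hsub hr', h1, h2', h3x, h4, h5, h6⟩
      obtain ⟨S', hg', hb'⟩ := (IH _ hss).2
        (fun w hw v hv => hlin w (hsub hw) v (hsub hv))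
        (fun f hf => h3 f (hsub hf))
        (fun x => le_trans (hdeg_mono hsub x) (hd2 x))
        htf' ⟨b, hbE', hweak'⟩
      refine ⟨insert u S', deg2_move haF hgF he hua hug hjust_e hg', ?_⟩
      have hc := Finset.card_sdiff_of_subset hDsub
      have hD3 := card_triple hag hae hge
      have hle3 := Finset.card_le_card hDsub
      have hci := Finset.card_insert_le u S'
      omega
theorem master (F : Finset (Finset α)) :
    (∀ a ∈ F, ∀ b ∈ F, a ≠ b → (a ∩ b).card ≤ 1) → (∀ e ∈ F, e.card = 3) →
    ∃ S : Finset α, Good F S ∧ 3 * S.card ≤ F.card := by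
  induction F using Finset.strongInduction with
  | _ F IH =>
  intro hlin h3
  by_cases hx : ∃ x : α, 3 ≤ hdeg F x
  · obtain ⟨x, hdx⟩ := hx
    have hDsub : F.filter (fun e => x ∈ e) ⊆ F := Finset.filter_subset _ _
    have hDne : (F.filter fun e => x ∈ e).Nonempty := by
      apply Finset.card_pos.1
      have : hdeg F x = (F.filter fun e => x ∈ e).card := rfl
      omega
    have hss : F \ F.filter (fun e => x ∈ e) ⊂ F := Finset.sdiff_ssubset hDsub hDne
    have hsub : F \ F.filter (fun e => x ∈ e) ⊆ F := Finset.sdiff_subset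
    obtain ⟨S', hg', hb'⟩ := IH _ hss
      (fun w hw v hv => hlin w (hsub hw) v (hsub hv))
      (fun f hf => h3 f (hsub hf))
    refine ⟨insert x S', ?_, ?_⟩
    · rw [Finset.insert_eq]
      refine move {x} S' (F.filter fun e => x ∈ e) hDsub ?_ hg'
      intro f hf
      exact Or.inl ⟨x, (Finset.mem_filter.1 hf).2, Finset.mem_singleton_self x⟩
    · have hc := Finset.card_sdiff_of_subset hDsub
      have hdd : (F.filter fun e => x ∈ e).card = hdeg F x := rfl
      have hle := Finset.card_le_card hDsub
      have hci := Finset.card_insert_le x S'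
      omega
  · push_neg at hx
    have hd2 : ∀ y : α, hdeg F y ≤ 2 := fun y => by have := hx y; omega
    exact (main_all F).1 hlin h3 hd2

end FVSProof

/-- Every linear 3-uniform hypergraph has a feedback vertex set of size at most m/3. -/
theorem fvs_le_third {α : Type*} [DecidableEq α] (E : Finset (Finset α))
    (h3 : ∀ e ∈ E, e.card = 3)
    (hlin : ∀ e ∈ E, ∀ f ∈ E, e ≠ f → (e ∩ f).card ≤ 1) :
    ∃ S : Finset α,
      (∀ C : HCycle E, ∃ i, ∃ x ∈ C.edg i, x ∈ S) ∧ 3 * S.card ≤ E.card := by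
  
  obtain ⟨S, hg, hb⟩ := FVSProof.master E hlin h3
  refine ⟨S, ?_, hb⟩
  intro C
  by_contra hcon
  push_neg at hcon
  exact hg ⟨C.k, C.two_le, C.vtx, C.edg, C.vtx_inj, C.edg_inj,
    fun i => FVSProof.mem_filtered.2 ⟨C.edg_mem i, hcon i⟩, C.vtx_mem, C.vtx_succ_mem⟩
end

section
/- Let H = (V, E) be a linear 3-uniform hypergraph with exactly p connected components. If F is a minimal feedback edge set of H (minimal with respect to inclusion), then |F| ≤ 2|E| − |V| + p. -/
/-- Two vertices lie in a common edge. -/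
def HAdj {α : Type*} (E : Finset (Finset α)) (u w : α) : Prop :=
  ∃ e ∈ E, u ∈ e ∧ w ∈ e

/-- The number of connected components of the hypergraph with vertex type `α`
and edge set `E`: the number of classes of the equivalence generated by
"lying in a common edge". -/
noncomputable def numComponents (α : Type*) (E : Finset (Finset α)) : ℕ :=
  Nat.card (Quotient (Relation.EqvGen.setoid (HAdj E)))

/-- `F` is a feedback edge set: it meets the edge set of every cycle. -/
def IsFES {α : Type*} (E F : Finset (Finset α)) : Prop :=
  F ⊆ E ∧ ∀ C : HCycle E, ∃ i, C.edg i ∈ F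

section Aux

variable {α : Type*} [Fintype α] [DecidableEq α]

private lemma eqvgen_mono {S T : Finset (Finset α)} (h : S ⊆ T) {x y : α}
    (hxy : Relation.EqvGen (HAdj S) x y) : Relation.EqvGen (HAdj T) x y := by
  refine Relation.EqvGen.mono ?_ _ _ hxy
  rintro a b ⟨e, he, ha, hb⟩
  exact ⟨e, h he, ha, hb⟩

/-- The number of components of the hypergraph with edge set `S`. -/
private noncomputable def comps (S : Finset (Finset α)) : ℕ :=
  Nat.card (Quotient (Relation.EqvGen.setoid (HAdj S)))

/-- Decomposition of connectivity after inserting an edge. -/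
private lemma insert_conn {S : Finset (Finset α)} {e : Finset α} {x y : α}
    (h : Relation.EqvGen (HAdj (insert e S)) x y) :
    Relation.EqvGen (HAdj S) x y ∨
      ((∃ u ∈ e, Relation.EqvGen (HAdj S) x u) ∧
       (∃ u ∈ e, Relation.EqvGen (HAdj S) y u)) := by
  induction h with
  | rel a b hab =>
    obtain ⟨f, hf, ha, hb⟩ := hab
    rcases Finset.mem_insert.mp hf with rfl | hf
    · exact Or.inr ⟨⟨a, ha, Relation.EqvGen.refl a⟩, ⟨b, hb, Relation.EqvGen.refl b⟩⟩
    · exact Or.inl (Relation.EqvGen.rel _ _ ⟨f, hf, ha, hb⟩)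
  | refl a => exact Or.inl (Relation.EqvGen.refl a)
  | symm a b _ ih =>
    rcases ih with h | ⟨h1, h2⟩
    · exact Or.inl (Relation.EqvGen.symm _ _ h)
    · exact Or.inr ⟨h2, h1⟩
  | trans a b c _ _ ih1 ih2 =>
    rcases ih1 with h1 | ⟨ha, hb⟩
    · rcases ih2 with h2 | ⟨hc, hd⟩
      · exact Or.inl (Relation.EqvGen.trans _ _ _ h1 h2)
      · obtain ⟨u, hu, hcu⟩ := hc
        exact Or.inr ⟨⟨u, hu, Relation.EqvGen.trans _ _ _ h1 hcu⟩, hd⟩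
    · rcases ih2 with h2 | ⟨hc, hd⟩
      · obtain ⟨u, hu, hbu⟩ := hb
        exact Or.inr ⟨ha, ⟨u, hu,
          Relation.EqvGen.trans _ _ _ (Relation.EqvGen.symm _ _ h2) hbu⟩⟩
      · exact Or.inr ⟨ha, hd⟩

private lemma card_aux {β γ : Type*} [Finite β] [Finite γ] (φ : β → γ) (A : Set β)
    (hA : A.Nonempty)
    (hinj : ∀ x, x ∉ A → ∀ y, y ∉ A → φ x = φ y → x = y)
    (hsep : ∀ x, x ∉ A → ∀ y, y ∈ A → φ x ≠ φ y) :
    Nat.card β + 1 ≤ Nat.card γ + A.ncard := by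
  have h1 : A.ncard + Aᶜ.ncard = Nat.card β := Set.ncard_add_ncard_compl A
  have h2 : (φ '' A).ncard + (φ '' A)ᶜ.ncard = Nat.card γ := Set.ncard_add_ncard_compl _
  have h3 : (φ '' Aᶜ).ncard = Aᶜ.ncard :=
    Set.ncard_image_of_injOn (fun x hx y hy hxy => hinj x hx y hy hxy)
  have h4 : φ '' Aᶜ ⊆ (φ '' A)ᶜ := by
    rintro _ ⟨x, hx, rfl⟩ ⟨y, hy, hxy⟩
    exact hsep x hx y hy hxy.symm
  have h5 : Aᶜ.ncard ≤ (φ '' A)ᶜ.ncard := h3 ▸ Set.ncard_le_ncard h4 (Set.toFinite _)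
  have h6 : 1 ≤ (φ '' A).ncard := by
    rw [Nat.one_le_iff_ne_zero, ← Nat.pos_iff_ne_zero]
    exact (Set.ncard_pos (Set.toFinite _)).mpr (hA.image φ)
  omega

/-- Inserting an edge decreases the number of components by at most the number
of distinct components of vertices of that edge. -/
private lemma step_lemma (S : Finset (Finset α)) (e : Finset α) (he : e.Nonempty) :
    comps S + 1 ≤ comps (insert e S) +
      ((fun v => Quotient.mk (Relation.EqvGen.setoid (HAdj S)) v) '' ↑e).ncard := by
  classical
  set s₁ := Relation.EqvGen.setoid (HAdj S) with hs₁
  set s₂ := Relation.EqvGen.setoid (HAdj (insert e S)) with hs₂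
  let φ : Quotient s₁ → Quotient s₂ :=
    Quotient.map id (fun a b h => eqvgen_mono (Finset.subset_insert e S) h)
  have hmem : ∀ a : α, (Quotient.mk s₁ a ∈
      (fun v => Quotient.mk s₁ v) '' (↑e : Set α)) ↔
      ∃ v ∈ e, Relation.EqvGen (HAdj S) v a := by
    intro a
    constructor
    · rintro ⟨v, hv, hva⟩
      exact ⟨v, hv, Quotient.exact hva⟩
    · rintro ⟨v, hv, hva⟩
      exact ⟨v, hv, Quotient.sound hva⟩
  refine card_aux φ _ ?_ ?_ ?_
  · obtain ⟨v, hv⟩ := he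
    exact ⟨_, ⟨v, hv, rfl⟩⟩
  · intro x hx y hy hxy
    induction x using Quotient.ind with | _ a =>
    induction y using Quotient.ind with | _ b =>
    have hab : Relation.EqvGen (HAdj (insert e S)) a b := Quotient.exact hxy
    rcases insert_conn hab with h | ⟨⟨u, hu, hau⟩, -⟩
    · exact Quotient.sound h
    · exact absurd ((hmem a).mpr ⟨u, hu, Relation.EqvGen.symm _ _ hau⟩) hx
  · intro x hx y hy hxy
    induction x using Quotient.ind with | _ a =>
    induction y using Quotient.ind with | _ b =>
    obtain ⟨v, hv, hvb⟩ := (hmem b).mp hy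
    have hab : Relation.EqvGen (HAdj (insert e S)) a b := Quotient.exact hxy
    rcases insert_conn hab with h | ⟨⟨u, hu, hau⟩, -⟩
    · exact hx ((hmem a).mpr ⟨v, hv, Relation.EqvGen.trans _ _ _ hvb
        (Relation.EqvGen.symm _ _ h)⟩)
    · exact hx ((hmem a).mpr ⟨u, hu, Relation.EqvGen.symm _ _ hau⟩)

private lemma image_ncard_le (S : Finset (Finset α)) (e : Finset α) :
    ((fun v => Quotient.mk (Relation.EqvGen.setoid (HAdj S)) v) '' ↑e).ncard ≤ e.card :=
  calc ((fun v => Quotient.mk (Relation.EqvGen.setoid (HAdj S)) v) '' ↑e).ncard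
      ≤ (↑e : Set α).ncard := Set.ncard_image_le (Set.toFinite _)
    _ = e.card := Set.ncard_coe_finset e

private lemma image_ncard_le_two {S : Finset (Finset α)} {e : Finset α} {u w : α}
    (hu : u ∈ e) (hw : w ∈ e) (hne : u ≠ w) (h3 : e.card = 3)
    (hconn : Relation.EqvGen (HAdj S) u w) :
    ((fun v => Quotient.mk (Relation.EqvGen.setoid (HAdj S)) v) '' ↑e).ncard ≤ 2 := by
  classical
  set s₁ := Relation.EqvGen.setoid (HAdj S) with hs₁
  have key : ((fun v => Quotient.mk s₁ v) '' ↑e) =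
      ((fun v => Quotient.mk s₁ v) '' ↑(e.erase w)) := by
    apply subset_antisymm
    · rintro _ ⟨v, hv, rfl⟩
      by_cases hvw : v = w
      · subst hvw
        exact ⟨u, by simp [Finset.mem_erase, hne, hu], Quotient.sound hconn⟩
      · exact ⟨v, by simp [Finset.mem_erase, hvw, hv], rfl⟩
    · exact Set.image_mono (by simpa using Finset.erase_subset w e)
  rw [key]
  calc ((fun v => Quotient.mk s₁ v) '' ↑(e.erase w)).ncard
      ≤ (↑(e.erase w) : Set α).ncard := Set.ncard_image_le (Set.toFinite _)
    _ = (e.erase w).card := Set.ncard_coe_finset _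
    _ ≤ 2 := by rw [Finset.card_erase_of_mem hw, h3]

private lemma phase1 : ∀ S : Finset (Finset α), (∀ e ∈ S, e.card = 3) →
    Fintype.card α ≤ comps S + 2 * S.card := by
  intro S
  induction S using Finset.induction_on with
  | empty =>
    intro _
    have hinj : Function.Injective
        (Quotient.mk (Relation.EqvGen.setoid (HAdj (∅ : Finset (Finset α))))) := by
      intro a b hab
      have h : Relation.EqvGen (HAdj (∅ : Finset (Finset α))) a b := Quotient.exact hab
      clear hab
      induction h with
      | rel a b hab => obtain ⟨f, hf, -, -⟩ := hab; simp at hf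
      | refl a => rfl
      | symm a b _ ih => exact ih.symm
      | trans a b c _ _ ih1 ih2 => exact ih1.trans ih2
    have := Nat.card_le_card_of_injective _ hinj
    simpa [comps, Nat.card_eq_fintype_card] using this
  | @insert a S ha ih =>
    intro h3
    have h3' : ∀ e ∈ S, e.card = 3 := fun e he => h3 e (Finset.mem_insert_of_mem he)
    have hne : a.Nonempty := Finset.card_pos.mp (by rw [h3 a (Finset.mem_insert_self a S)]; omega)
    have hstep := step_lemma S a hne
    have hbound := image_ncard_le S a
    have hcard : (insert a S).card = S.card + 1 := Finset.card_insert_of_notMem ha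
    have := ih h3'
    have h3a : a.card = 3 := h3 a (Finset.mem_insert_self a S)
    omega

private lemma phase2 (E F : Finset (Finset α)) (hFE : F ⊆ E)
    (h3 : ∀ e ∈ E, e.card = 3)
    (hprop : ∀ f ∈ F, ∃ u ∈ f, ∃ w ∈ f, u ≠ w ∧ Relation.EqvGen (HAdj (E \ F)) u w) :
    ∀ F', F' ⊆ F → comps (E \ F') ≤ comps E + F'.card := by
  intro F'
  induction F' using Finset.induction_on with
  | empty => intro _; simp
  | @insert f F'' hf ih =>
    intro hsub
    have hfF : f ∈ F := hsub (Finset.mem_insert_self f F'')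
    have hsub'' : F'' ⊆ F := fun x hx => hsub (Finset.mem_insert_of_mem hx)
    have hfE : f ∈ E := hFE hfF
    have hEeq : E \ F'' = insert f (E \ insert f F'') := by
      ext x
      simp only [Finset.mem_sdiff, Finset.mem_insert]
      constructor
      · rintro ⟨hxE, hxF⟩
        by_cases hxf : x = f
        · exact Or.inl hxf
        · exact Or.inr ⟨hxE, fun h => h.elim hxf hxF⟩
      · rintro (rfl | ⟨hxE, hxF⟩)
        · exact ⟨hfE, hf⟩
        · exact ⟨hxE, fun h => hxF (Or.inr h)⟩
    obtain ⟨u, hu, w, hw, hne, hconn⟩ := hprop f hfF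
    have hmono : E \ F ⊆ E \ insert f F'' := by
      apply Finset.sdiff_subset_sdiff (le_refl E)
      intro x hx
      rcases Finset.mem_insert.mp hx with rfl | hx
      · exact hfF
      · exact hsub'' hx
    have hconn' : Relation.EqvGen (HAdj (E \ insert f F'')) u w := eqvgen_mono hmono hconn
    have h3f : f.card = 3 := h3 f hfE
    have hnef : f.Nonempty := Finset.card_pos.mp (by rw [h3f]; omega)
    have hstep := step_lemma (E \ insert f F'') f hnef
    have hb2 := image_ncard_le_two hu hw hne h3f hconn'
    rw [← hEeq] at hstep
    have hih := ih hsub''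
    have hcard : (insert f F'').card = F''.card + 1 := Finset.card_insert_of_notMem hf
    omega

end Aux

/-- A minimal feedback edge set of a linear 3-uniform hypergraph with `p`
components has size at most 2|E| − |V| + p. -/
theorem minimal_fes_card {α : Type*} [Fintype α] [DecidableEq α]
    (E : Finset (Finset α))
    (h3 : ∀ e ∈ E, e.card = 3)
    (hlin : ∀ e ∈ E, ∀ f ∈ E, e ≠ f → (e ∩ f).card ≤ 1)
    (F : Finset (Finset α)) (hF : IsFES E F)
    (hmin : ∀ F' ⊆ F, IsFES E F' → F' = F) :
    F.card + Fintype.card α ≤ 2 * E.card + numComponents α E := by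
  classical
  have hFE : F ⊆ E := hF.1
  -- every f ∈ F has two vertices connected in E \ F
  have hprop : ∀ f ∈ F, ∃ u ∈ f, ∃ w ∈ f, u ≠ w ∧ Relation.EqvGen (HAdj (E \ F)) u w := by
    intro f hfF
    have hnotFES : ¬ IsFES E (F.erase f) := by
      intro hFES
      have := hmin (F.erase f) (Finset.erase_subset f F) hFES
      exact (Finset.erase_ne_self.mpr hfF) this
    have hsubE : F.erase f ⊆ E := (Finset.erase_subset f F).trans hFE
    have : ¬ ∀ C : HCycle E, ∃ i, C.edg i ∈ F.erase f := fun h => hnotFES ⟨hsubE, h⟩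
    push_neg at this
    obtain ⟨C, hC⟩ := this
    obtain ⟨i, hiF⟩ := hF.2 C
    have hif : C.edg i = f := by
      by_contra hne
      have := hC i
      rw [Finset.mem_erase] at this
      push_neg at this
      exact this hne hiF
    -- all other edges avoid F
    have hother : ∀ j, j ≠ i → C.edg j ∈ E \ F := by
      intro j hji
      rw [Finset.mem_sdiff]
      refine ⟨C.edg_mem j, fun hjF => ?_⟩
      have hejf : C.edg j = f := by
        by_contra hne
        have := hC j
        rw [Finset.mem_erase] at this
        push_neg at this
        exact this hne hjF
      exact hji (C.edg_inj (hejf.trans hif.symm))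
    haveI : NeZero C.k := ⟨by have := C.two_le; omega⟩
    haveI : Fact (1 < C.k) := ⟨C.two_le⟩
    have hone : (1 : ZMod C.k) ≠ 0 := one_ne_zero
    -- the path around the cycle avoiding edge i
    have hpath : ∀ j : ℕ, j ≤ C.k - 1 →
        Relation.EqvGen (HAdj (E \ F)) (C.vtx (i + 1)) (C.vtx (i + 1 + (j : ZMod C.k))) := by
      intro j
      induction j with
      | zero => intro _; simpa using Relation.EqvGen.refl _
      | succ j ihj =>
        intro hjk
        have prev := ihj (by omega)
        have hmi : i + 1 + (j : ZMod C.k) ≠ i := by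
          intro hmeq
          have h0' : (1 : ZMod C.k) + (j : ZMod C.k) = 0 := by
            linear_combination hmeq
          have h0 : ((1 + j : ℕ) : ZMod C.k) = 0 := by push_cast; exact h0'
          have hdvd : C.k ∣ 1 + j := (ZMod.natCast_eq_zero_iff _ _).mp h0
          have := Nat.le_of_dvd (by omega) hdvd
          omega
        have hedge : C.edg (i + 1 + (j : ZMod C.k)) ∈ E \ F := hother _ hmi
        have hstep : Relation.EqvGen (HAdj (E \ F)) (C.vtx (i + 1 + (j : ZMod C.k)))
            (C.vtx (i + 1 + (j : ZMod C.k) + 1)) :=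
          Relation.EqvGen.rel _ _ ⟨_, hedge, C.vtx_mem _, C.vtx_succ_mem _⟩
        have hcast : i + 1 + ((j + 1 : ℕ) : ZMod C.k) = i + 1 + (j : ZMod C.k) + 1 := by
          push_cast; ring
        rw [hcast]
        exact Relation.EqvGen.trans _ _ _ prev hstep
    have hfinal := hpath (C.k - 1) (le_refl _)
    have hcast : i + 1 + ((C.k - 1 : ℕ) : ZMod C.k) = i := by
      have h1 : ((1 + (C.k - 1) : ℕ) : ZMod C.k) = 0 := by
        have hk : 1 + (C.k - 1) = C.k := by have := C.two_le; omega
        rw [hk, ZMod.natCast_self]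
      have h2 : (1 : ZMod C.k) + ((C.k - 1 : ℕ) : ZMod C.k) = 0 := by
        push_cast at h1; exact h1
      calc i + 1 + ((C.k - 1 : ℕ) : ZMod C.k)
          = i + ((1 : ZMod C.k) + ((C.k - 1 : ℕ) : ZMod C.k)) := by ring
        _ = i := by rw [h2, add_zero]
    rw [hcast] at hfinal
    refine ⟨C.vtx i, ?_, C.vtx (i + 1), ?_, ?_, Relation.EqvGen.symm _ _ hfinal⟩
    · rw [← hif]; exact C.vtx_mem i
    · rw [← hif]; exact C.vtx_succ_mem i
    · intro heq
      have := C.vtx_inj heq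
      have : (1 : ZMod C.k) = 0 := by
        have h := left_eq_add.mp this
        exact h
      exact hone this
  have hp2 := phase2 E F hFE h3 hprop F (le_refl F)
  have hp1 := phase1 (E \ F) (fun e he => h3 e (Finset.mem_sdiff.mp he).1)
  have hcardsd : (E \ F).card = E.card - F.card := Finset.card_sdiff_of_subset hFE
  have hFcard : F.card ≤ E.card := Finset.card_le_card hFE
  have hnum : numComponents α E = comps E := rfl
  omega
end

section
/- If G is a graph whose triangle packing number ν_t(G) satisfies ν_t(G) ≥ c·|T_G| for some real c ∈ (0,1], where T_G is the set of triangles of G, then the triangle covering number satisfies τ_t(G) ≤ ((3c+1)/(3c))·ν_t(G). -/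
/-- `t` is (the vertex set of) a triangle of `G`. -/
def IsTriangle {V : Type*} (G : SimpleGraph V) (t : Finset V) : Prop :=
  t.card = 3 ∧ ∀ x ∈ t, ∀ y ∈ t, x ≠ y → G.Adj x y

/-- The set of (three) edges of the triangle with vertex set `t`. -/
def triEdges {V : Type*} [DecidableEq V] (t : Finset V) : Finset (Sym2 V) :=
  ((t ×ˢ t).filter fun p => p.1 ≠ p.2).image fun p => s(p.1, p.2)

/-- A triangle cover of `G`: a set of edges of `G` intersecting (the edge set of)
every triangle of `G`. -/
def IsTriangleCover {V : Type*} [DecidableEq V] (G : SimpleGraph V)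
    (C : Finset (Sym2 V)) : Prop :=
  (∀ e ∈ C, e ∈ G.edgeSet) ∧
    ∀ t : Finset V, IsTriangle G t → ∃ e ∈ triEdges t, e ∈ C

/-- A triangle packing of `G`: a set of pairwise edge-disjoint triangles. -/
def IsTrianglePacking {V : Type*} [DecidableEq V] (G : SimpleGraph V)
    (P : Finset (Finset V)) : Prop :=
  (∀ t ∈ P, IsTriangle G t) ∧
    ∀ t₁ ∈ P, ∀ t₂ ∈ P, t₁ ≠ t₂ → Disjoint (triEdges t₁) (triEdges t₂)

/-- The triangle covering number τ_t(G). -/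
noncomputable def tauT {V : Type*} [DecidableEq V] (G : SimpleGraph V) : ℕ :=
  sInf {n | ∃ C : Finset (Sym2 V), IsTriangleCover G C ∧ C.card = n}

/-- The triangle packing number ν_t(G). -/
noncomputable def nuT {V : Type*} [DecidableEq V] (G : SimpleGraph V) : ℕ :=
  sSup {n | ∃ P : Finset (Finset V), IsTrianglePacking G P ∧ P.card = n}

/-- The number of triangles of `G`, i.e. |T_G|. -/
noncomputable def numTris {V : Type*} (G : SimpleGraph V) : ℕ :=
  Set.ncard {t : Finset V | IsTriangle G t}

/-- The number of edges of `G`. -/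
noncomputable def numEdges {V : Type*} (G : SimpleGraph V) : ℕ :=
  Set.ncard G.edgeSet

open Finset

section Hyper

variable {α : Type*} [DecidableEq α]

/-- The family of members of `T` (other than `t`) meeting `t`. -/
def nbrF (T : Finset (Finset α)) (t : Finset α) : Finset (Finset α) :=
  (T.erase t).filter fun s => (s ∩ t).Nonempty

lemma mem_nbrF {T : Finset (Finset α)} {t s : Finset α} :
    s ∈ nbrF T t ↔ s ≠ t ∧ s ∈ T ∧ (s ∩ t).Nonempty := by
  simp [nbrF, Finset.mem_filter, Finset.mem_erase, and_assoc]

lemma nbrF_mono {T T' : Finset (Finset α)} (h : T' ⊆ T) (t : Finset α) :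
    nbrF T' t ⊆ nbrF T t := by
  intro s hs
  rw [mem_nbrF] at hs ⊢
  exact ⟨hs.1, h hs.2.1, hs.2.2⟩


lemma inter_nonempty_comm {s t : Finset α} (h : (s ∩ t).Nonempty) :
    (t ∩ s).Nonempty := by rwa [inter_comm]

lemma disjoint_of_not_nbr {T : Finset (Finset α)} {t s : Finset α}
    (hs : s ∈ T) (hst : s ≠ t) (h : s ∉ nbrF T t) : Disjoint t s := by
  rw [Finset.disjoint_right]
  intro x hxs hxt
  exact h (mem_nbrF.mpr ⟨hst, hs, ⟨x, mem_inter.mpr ⟨hxs, hxt⟩⟩⟩)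

/-- The inductive step for the main conflict-structure lemma: remove a block `R`
supporting enough independent sets and matchings. -/
lemma lemL_step {n : ℕ}
    (ih : ∀ (T : Finset (Finset α)), T.card ≤ n → (∀ t ∈ T, (nbrF T t).card ≤ 3) →
      ∃ (A : Finset (Finset α)) (M : Finset (Finset α × Finset α)),
        A ⊆ T ∧ (∀ a ∈ A, ∀ b ∈ A, a ≠ b → Disjoint a b) ∧
        (∀ p ∈ M, p.1 ∈ T ∧ p.2 ∈ T ∧ p.1 ≠ p.2 ∧ (p.1 ∩ p.2).Nonempty) ∧
        (∀ p ∈ M, ∀ q ∈ M, p ≠ q → p.1 ≠ q.1 ∧ p.1 ≠ q.2 ∧ p.2 ≠ q.1 ∧ p.2 ≠ q.2) ∧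
        2 * T.card ≤ 3 * A.card + 3 * M.card)
    (T : Finset (Finset α)) (hTn : T.card ≤ n + 1)
    (R : Finset (Finset α)) (hRT : R ⊆ T) (hRne : R.Nonempty)
    (A₀ : Finset (Finset α)) (M₀ : Finset (Finset α × Finset α))
    (hA₀R : A₀ ⊆ R)
    (hA₀pd : ∀ a ∈ A₀, ∀ b ∈ A₀, a ≠ b → Disjoint a b)
    (hA₀out : ∀ a ∈ A₀, ∀ s ∈ T, s ∉ R → Disjoint a s)
    (hM₀R : ∀ p ∈ M₀, p.1 ∈ R ∧ p.2 ∈ R ∧ p.1 ≠ p.2 ∧ (p.1 ∩ p.2).Nonempty)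
    (hM₀d : ∀ p ∈ M₀, ∀ q ∈ M₀, p ≠ q → p.1 ≠ q.1 ∧ p.1 ≠ q.2 ∧ p.2 ≠ q.1 ∧ p.2 ≠ q.2)
    (hdeg : ∀ t ∈ T, (nbrF T t).card ≤ 3)
    (hgain : 2 * R.card ≤ 3 * A₀.card + 3 * M₀.card) :
    ∃ (A : Finset (Finset α)) (M : Finset (Finset α × Finset α)),
        A ⊆ T ∧ (∀ a ∈ A, ∀ b ∈ A, a ≠ b → Disjoint a b) ∧
        (∀ p ∈ M, p.1 ∈ T ∧ p.2 ∈ T ∧ p.1 ≠ p.2 ∧ (p.1 ∩ p.2).Nonempty) ∧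
        (∀ p ∈ M, ∀ q ∈ M, p ≠ q → p.1 ≠ q.1 ∧ p.1 ≠ q.2 ∧ p.2 ≠ q.1 ∧ p.2 ≠ q.2) ∧
        2 * T.card ≤ 3 * A.card + 3 * M.card := by
  classical
  set T' := T \ R with hT'def
  have hT'sub : T' ⊆ T := sdiff_subset
  have hT'card : T'.card = T.card - R.card := card_sdiff_of_subset hRT
  have hRpos : 0 < R.card := card_pos.mpr hRne
  have hRleT : R.card ≤ T.card := card_le_card hRT
  have hT'n : T'.card ≤ n := by omega
  have hdeg' : ∀ t ∈ T', (nbrF T' t).card ≤ 3 := fun t ht =>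
    le_trans (card_le_card (nbrF_mono hT'sub t)) (hdeg t (hT'sub ht))
  obtain ⟨A', M', hA'T, hA'pd, hM'T, hM'd, hcard'⟩ := ih T' hT'n hdeg'
  have hA'notR : ∀ a ∈ A', a ∉ R := fun a ha => (mem_sdiff.mp (hA'T ha)).2
  have hM'notR : ∀ p ∈ M', p.1 ∉ R ∧ p.2 ∉ R := fun p hp =>
    ⟨(mem_sdiff.mp (hM'T p hp).1).2, (mem_sdiff.mp (hM'T p hp).2.1).2⟩
  have hAdisj : Disjoint A' A₀ := by
    rw [Finset.disjoint_left]
    exact fun a ha ha₀ => hA'notR a ha (hA₀R ha₀)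
  have hMdisj : Disjoint M' M₀ := by
    rw [Finset.disjoint_left]
    exact fun p hp hp₀ => (hM'notR p hp).1 (hM₀R p hp₀).1
  refine ⟨A' ∪ A₀, M' ∪ M₀, ?_, ?_, ?_, ?_, ?_⟩
  · exact union_subset (hA'T.trans hT'sub) (hA₀R.trans hRT)
  · intro a ha b hb hab
    rcases mem_union.mp ha with ha' | ha₀ <;> rcases mem_union.mp hb with hb' | hb₀
    · exact hA'pd a ha' b hb' hab
    · exact (hA₀out b hb₀ a (hT'sub (hA'T ha')) (hA'notR a ha')).symm
    · exact hA₀out a ha₀ b (hT'sub (hA'T hb')) (hA'notR b hb')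
    · exact hA₀pd a ha₀ b hb₀ hab
  · intro p hp
    rcases mem_union.mp hp with hp' | hp₀
    · exact ⟨hT'sub (hM'T p hp').1, hT'sub (hM'T p hp').2.1, (hM'T p hp').2.2⟩
    · exact ⟨hRT (hM₀R p hp₀).1, hRT (hM₀R p hp₀).2.1, (hM₀R p hp₀).2.2⟩
  · intro p hp q hq hpq
    rcases mem_union.mp hp with hp' | hp₀ <;> rcases mem_union.mp hq with hq' | hq₀
    · exact hM'd p hp' q hq' hpq
    · have h1 := hM'notR p hp'
      have h2 := hM₀R q hq₀
      exact ⟨fun e => h1.1 (e ▸ h2.1), fun e => h1.1 (e ▸ h2.2.1),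
        fun e => h1.2 (e ▸ h2.1), fun e => h1.2 (e ▸ h2.2.1)⟩
    · have h1 := hM'notR q hq'
      have h2 := hM₀R p hp₀
      exact ⟨fun e => h1.1 (e ▸ h2.1), fun e => h1.2 (e ▸ h2.1),
        fun e => h1.1 (e ▸ h2.2.1), fun e => h1.2 (e ▸ h2.2.1)⟩
    · exact hM₀d p hp₀ q hq₀ hpq
  · rw [card_union_of_disjoint hAdisj, card_union_of_disjoint hMdisj]
    omega


/-- For a family in which every member meets at most three others, there are a
disjoint subfamily `A` and a "matching" `M` of intersecting pairs with
`2|T| ≤ 3|A| + 3|M|`. -/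
lemma lemL : ∀ (n : ℕ) (T : Finset (Finset α)), T.card ≤ n →
    (∀ t ∈ T, (nbrF T t).card ≤ 3) →
    ∃ (A : Finset (Finset α)) (M : Finset (Finset α × Finset α)),
      A ⊆ T ∧ (∀ a ∈ A, ∀ b ∈ A, a ≠ b → Disjoint a b) ∧
      (∀ p ∈ M, p.1 ∈ T ∧ p.2 ∈ T ∧ p.1 ≠ p.2 ∧ (p.1 ∩ p.2).Nonempty) ∧
      (∀ p ∈ M, ∀ q ∈ M, p ≠ q → p.1 ≠ q.1 ∧ p.1 ≠ q.2 ∧ p.2 ≠ q.1 ∧ p.2 ≠ q.2) ∧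
      2 * T.card ≤ 3 * A.card + 3 * M.card := by
  intro n
  induction n with
  | zero =>
    intro T hT _
    have : T = ∅ := card_eq_zero.mp (Nat.le_zero.mp hT)
    subst this
    exact ⟨∅, ∅, by simp, by simp, by simp, by simp, by simp⟩
  | succ n ih =>
    intro T hT hdeg
    rcases T.eq_empty_or_nonempty with rfl | ⟨t₀, ht₀⟩
    · exact ⟨∅, ∅, by simp, by simp, by simp, by simp, by simp⟩
    by_cases h2 : ∃ t ∈ T, (nbrF T t).card ≤ 2
    · obtain ⟨t, ht, hc2⟩ := h2
      have hnbrT : nbrF T t ⊆ T := fun s hs => (mem_nbrF.mp hs).2.1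
      have hRT : insert t (nbrF T t) ⊆ T := insert_subset ht hnbrT
      have hout : ∀ a ∈ ({t} : Finset (Finset α)), ∀ s ∈ T,
          s ∉ insert t (nbrF T t) → Disjoint a s := by
        intro a ha s hs hsR
        rw [mem_singleton] at ha; subst ha
        rw [mem_insert] at hsR
        push_neg at hsR
        rw [Finset.disjoint_right]
        intro x hx hxa
        exact hsR.2 (mem_nbrF.mpr ⟨hsR.1, hs, ⟨x, mem_inter.mpr ⟨hx, hxa⟩⟩⟩)
      rcases (nbrF T t).eq_empty_or_nonempty with hemp | ⟨u, hu⟩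
      · refine lemL_step ih T hT (insert t (nbrF T t)) hRT ⟨t, mem_insert_self _ _⟩
          {t} ∅ (by simp) (by simp) hout (by simp) (by simp) hdeg ?_
        rw [hemp]
        simp
      · have hu' := mem_nbrF.mp hu
        refine lemL_step ih T hT (insert t (nbrF T t)) hRT ⟨t, mem_insert_self _ _⟩
          {t} {(t, u)} (by simp) (by simp) hout ?_ (by simp) hdeg ?_
        · intro p hp
          rw [mem_singleton] at hp; subst hp
          refine ⟨mem_insert_self _ _, mem_insert_of_mem hu, Ne.symm hu'.1, ?_⟩
          obtain ⟨x, hx⟩ := hu'.2.2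
          rw [mem_inter] at hx
          exact ⟨x, mem_inter.mpr ⟨hx.2, hx.1⟩⟩
        · have : (insert t (nbrF T t)).card ≤ 3 := le_trans (card_insert_le _ _) (by omega)
          simp only [card_singleton]
          omega
    · push_neg at h2
      have h3 : ∀ t ∈ T, (nbrF T t).card = 3 := fun t ht =>
        le_antisymm (hdeg t ht) (h2 t ht)
      by_cases htri : ∃ t ∈ T, ∃ p ∈ nbrF T t, ∃ q ∈ nbrF T t, p ≠ q ∧ (p ∩ q).Nonempty
      · obtain ⟨t, ht, p, hp, q, hq, hpq, hpqi⟩ := htri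
        have hnbrT : nbrF T t ⊆ T := fun s hs => (mem_nbrF.mp hs).2.1
        have hRT : insert t (nbrF T t) ⊆ T := insert_subset ht hnbrT
        have hout : ∀ a ∈ ({t} : Finset (Finset α)), ∀ s ∈ T,
            s ∉ insert t (nbrF T t) → Disjoint a s := by
          intro a ha s hs hsR
          rw [mem_singleton] at ha; subst ha
          rw [mem_insert] at hsR
          push_neg at hsR
          exact disjoint_of_not_nbr hs hsR.1 hsR.2
        have hrcard : 1 ≤ (((nbrF T t).erase p).erase q).card := by
          have hq' : q ∈ (nbrF T t).erase p := mem_erase.mpr ⟨hpq.symm, hq⟩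
          rw [card_erase_of_mem hq', card_erase_of_mem hp, h3 t ht]
        obtain ⟨r, hr⟩ := card_pos.mp
          (show 0 < (((nbrF T t).erase p).erase q).card by omega)
        rw [mem_erase, mem_erase] at hr
        obtain ⟨hrq, hrp, hrN⟩ := hr
        have hpt : p ≠ t := (mem_nbrF.mp hp).1
        have hqt : q ≠ t := (mem_nbrF.mp hq).1
        have hrt : r ≠ t := (mem_nbrF.mp hrN).1
        refine lemL_step ih T hT (insert t (nbrF T t)) hRT ⟨t, mem_insert_self _ _⟩
          {t} {(p, q), (t, r)} (by simp) (by simp) hout ?_ ?_ hdeg ?_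
        · intro pr hpr
          rcases mem_insert.mp hpr with h | h
          · subst h
            exact ⟨mem_insert_of_mem hp, mem_insert_of_mem hq, hpq, hpqi⟩
          · rw [mem_singleton] at h; subst h
            exact ⟨mem_insert_self _ _, mem_insert_of_mem hrN, hrt.symm,
              inter_nonempty_comm (mem_nbrF.mp hrN).2.2⟩
        · intro pr hpr qr hqr hne
          rcases mem_insert.mp hpr with h1 | h1 <;> rcases mem_insert.mp hqr with h2 | h2
          · subst h1; subst h2; exact absurd rfl hne
          · rw [mem_singleton] at h2; subst h1; subst h2
            exact ⟨hpt, hrp.symm, hqt, hrq.symm⟩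
          · rw [mem_singleton] at h1; subst h1; subst h2
            exact ⟨hpt.symm, hqt.symm, hrp, hrq⟩
          · rw [mem_singleton] at h1; rw [mem_singleton] at h2
            subst h1; subst h2; exact absurd rfl hne
        · have hR4 : (insert t (nbrF T t)).card ≤ 4 := by
            refine (card_insert_le _ _).trans ?_
            rw [h3 t ht]
          have hM2 : ({(p, q), (t, r)} : Finset (Finset α × Finset α)).card = 2 := by
            rw [card_insert_of_notMem, card_singleton]
            intro hmem
            exact hpt (congrArg Prod.fst (mem_singleton.mp hmem))
          rw [hM2]
          simp only [card_singleton]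
          omega
      by_cases hC4 : ∃ x ∈ T, ∃ y ∈ T, x ≠ y ∧ Disjoint x y ∧
          2 ≤ (nbrF T x ∩ nbrF T y).card
      · obtain ⟨x, hxT, y, hyT, hxy, hdxy, hI⟩ := hC4
        obtain ⟨p, hp⟩ := card_pos.mp (show 0 < (nbrF T x).card by rw [h3 x hxT]; norm_num)
        have hq2 : 2 ≤ ((nbrF T y).erase p).card := by
          by_cases hpy : p ∈ nbrF T y
          · rw [card_erase_of_mem hpy, h3 y hyT]
          · rw [erase_eq_of_notMem hpy, h3 y hyT]
            omega
        obtain ⟨q, hq⟩ := card_pos.mp (show 0 < ((nbrF T y).erase p).card by omega)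
        rw [mem_erase] at hq
        obtain ⟨hqp, hqN⟩ := hq
        have hpx : p ≠ x := (mem_nbrF.mp hp).1
        have hqy : q ≠ y := (mem_nbrF.mp hqN).1
        have hqx : q ≠ x := by
          intro e; subst e
          have hne : (q ∩ y).Nonempty := (mem_nbrF.mp hqN).2.2
          exact hne.ne_empty (disjoint_iff_inter_eq_empty.mp hdxy)
        have hpy : p ≠ y := by
          intro e; subst e
          have hne : (p ∩ x).Nonempty := (mem_nbrF.mp hp).2.2
          rw [inter_comm] at hne
          exact hne.ne_empty (disjoint_iff_inter_eq_empty.mp hdxy)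
        set R := insert x (insert y (nbrF T x ∪ nbrF T y)) with hRdef
        have hnbrxT : nbrF T x ⊆ T := fun s hs => (mem_nbrF.mp hs).2.1
        have hnbryT : nbrF T y ⊆ T := fun s hs => (mem_nbrF.mp hs).2.1
        have hRT : R ⊆ T := insert_subset hxT (insert_subset hyT
          (union_subset hnbrxT hnbryT))
        have hR6 : R.card ≤ 6 := by
          have hu : (nbrF T x ∪ nbrF T y).card + (nbrF T x ∩ nbrF T y).card
              = (nbrF T x).card + (nbrF T y).card := card_union_add_card_inter _ _
          rw [h3 x hxT, h3 y hyT] at hu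
          refine (card_insert_le _ _).trans (Nat.succ_le_succ ?_)
          refine (card_insert_le _ _).trans (Nat.succ_le_succ ?_)
          omega
        refine lemL_step ih T hT R hRT ⟨x, mem_insert_self _ _⟩
          {x, y} {(x, p), (y, q)} ?_ ?_ ?_ ?_ ?_ hdeg ?_
        · intro a ha
          rcases mem_insert.mp ha with h | h
          · subst h; exact mem_insert_self _ _
          · rw [mem_singleton] at h; subst h
            exact mem_insert_of_mem (mem_insert_self _ _)
        · intro a ha b hb hab
          rcases mem_insert.mp ha with h1 | h1 <;> rcases mem_insert.mp hb with h2 | h2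
          · subst h1; subst h2; exact absurd rfl hab
          · rw [mem_singleton] at h2; subst h1; subst h2; exact hdxy
          · rw [mem_singleton] at h1; subst h1; subst h2; exact hdxy.symm
          · rw [mem_singleton] at h1; rw [mem_singleton] at h2
            subst h1; subst h2; exact absurd rfl hab
        · intro a ha s hs hsR
          have hsx : s ≠ x := fun e => hsR (e ▸ mem_insert_self _ _)
          have hsy : s ≠ y := fun e => hsR (e ▸ mem_insert_of_mem (mem_insert_self _ _))
          have hsnx : s ∉ nbrF T x := fun hmem =>
            hsR (mem_insert_of_mem (mem_insert_of_mem (mem_union_left _ hmem)))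
          have hsny : s ∉ nbrF T y := fun hmem =>
            hsR (mem_insert_of_mem (mem_insert_of_mem (mem_union_right _ hmem)))
          rcases mem_insert.mp ha with h | h
          · subst h; exact disjoint_of_not_nbr hs hsx hsnx
          · rw [mem_singleton] at h; subst h; exact disjoint_of_not_nbr hs hsy hsny
        · intro pr hpr
          rcases mem_insert.mp hpr with h | h
          · subst h
            refine ⟨mem_insert_self _ _,
              mem_insert_of_mem (mem_insert_of_mem (mem_union_left _ hp)),
              hpx.symm, inter_nonempty_comm (mem_nbrF.mp hp).2.2⟩
          · rw [mem_singleton] at h; subst h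
            refine ⟨mem_insert_of_mem (mem_insert_self _ _),
              mem_insert_of_mem (mem_insert_of_mem (mem_union_right _ hqN)),
              hqy.symm, inter_nonempty_comm (mem_nbrF.mp hqN).2.2⟩
        · intro pr hpr qr hqr hne
          rcases mem_insert.mp hpr with h1 | h1 <;> rcases mem_insert.mp hqr with h2 | h2
          · subst h1; subst h2; exact absurd rfl hne
          · rw [mem_singleton] at h2; subst h1; subst h2
            exact ⟨hxy, hqx.symm, hpy, hqp.symm⟩
          · rw [mem_singleton] at h1; subst h1; subst h2
            exact ⟨hxy.symm, hpy.symm, hqx, hqp⟩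
          · rw [mem_singleton] at h1; rw [mem_singleton] at h2
            subst h1; subst h2; exact absurd rfl hne
        · have hA2 : ({x, y} : Finset (Finset α)).card = 2 := by
            rw [card_insert_of_notMem (by simpa using hxy), card_singleton]
          have hM2 : ({(x, p), (y, q)} : Finset (Finset α × Finset α)).card = 2 := by
            rw [card_insert_of_notMem, card_singleton]
            intro hmem
            exact hxy (congrArg Prod.fst (mem_singleton.mp hmem))
          rw [hA2, hM2]
          omega
      -- final case: triangle-free, no two disjoint members with two common neighbours
      push_neg at htri hC4
      have htf : ∀ t ∈ T, ∀ p ∈ nbrF T t, ∀ q ∈ nbrF T t, p ≠ q → Disjoint p q := by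
        intro t ht p hp q hq hpq
        exact disjoint_iff_inter_eq_empty.mpr
          (htri t ht p hp q hq hpq)
      obtain ⟨a, b, c, hab, hac, hbc, hnbr⟩ := card_eq_three.mp (h3 t₀ ht₀)
      have haN : a ∈ nbrF T t₀ := by rw [hnbr]; simp
      have hbN : b ∈ nbrF T t₀ := by rw [hnbr]; simp
      have hcN : c ∈ nbrF T t₀ := by rw [hnbr]; simp
      have haT : a ∈ T := (mem_nbrF.mp haN).2.1
      have hbT : b ∈ T := (mem_nbrF.mp hbN).2.1
      have hcT : c ∈ T := (mem_nbrF.mp hcN).2.1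
      have hat : a ≠ t₀ := (mem_nbrF.mp haN).1
      have hbt : b ≠ t₀ := (mem_nbrF.mp hbN).1
      have hct : c ≠ t₀ := (mem_nbrF.mp hcN).1
      have hdab : Disjoint a b := htf t₀ ht₀ a haN b hbN hab
      have hdac : Disjoint a c := htf t₀ ht₀ a haN c hcN hac
      have hdbc : Disjoint b c := htf t₀ ht₀ b hbN c hcN hbc
      have ht₀Nb : t₀ ∈ nbrF T b :=
        mem_nbrF.mpr ⟨hbt.symm, ht₀, inter_nonempty_comm (mem_nbrF.mp hbN).2.2⟩
      have ht₀Nc : t₀ ∈ nbrF T c :=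
        mem_nbrF.mpr ⟨hct.symm, ht₀, inter_nonempty_comm (mem_nbrF.mp hcN).2.2⟩
      have hI : (nbrF T b ∩ nbrF T c).card ≤ 1 := by
        have := hC4 b hbT c hcT hbc hdbc
        omega
      have hIone : ∀ z ∈ nbrF T b ∩ nbrF T c, z = t₀ := fun z hz =>
        Finset.card_le_one.mp hI z hz t₀ (mem_inter.mpr ⟨ht₀Nb, ht₀Nc⟩)
      have hxcard : 2 ≤ ((nbrF T b).erase t₀).card := by
        rw [card_erase_of_mem ht₀Nb, h3 b hbT]
      obtain ⟨x, hx⟩ := card_pos.mp (show 0 < ((nbrF T b).erase t₀).card by omega)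
      rw [mem_erase] at hx
      obtain ⟨hxt, hxNb⟩ := hx
      have hxT : x ∈ T := (mem_nbrF.mp hxNb).2.1
      have hxb : x ≠ b := (mem_nbrF.mp hxNb).1
      have hxNc : x ∉ nbrF T c := fun hxc => hxt (hIone x (mem_inter.mpr ⟨hxNb, hxc⟩))
      obtain ⟨y, hy⟩ := card_pos.mp (show 0 < ((nbrF T c).erase t₀).card by
        rw [card_erase_of_mem ht₀Nc, h3 c hcT]; norm_num)
      rw [mem_erase] at hy
      obtain ⟨hyt, hyNc⟩ := hy
      have hyT : y ∈ T := (mem_nbrF.mp hyNc).2.1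
      have hyc : y ≠ c := (mem_nbrF.mp hyNc).1
      have hxa : x ≠ a := by
        intro e; subst e
        have hne : (x ∩ b).Nonempty := (mem_nbrF.mp hxNb).2.2
        exact hne.ne_empty (disjoint_iff_inter_eq_empty.mp hdab)
      have hxc : x ≠ c := by
        intro e; subst e
        have hne : (x ∩ b).Nonempty := (mem_nbrF.mp hxNb).2.2
        rw [inter_comm] at hne
        exact hne.ne_empty (disjoint_iff_inter_eq_empty.mp hdbc)
      have hya : y ≠ a := by
        intro e; subst e
        have hne : (y ∩ c).Nonempty := (mem_nbrF.mp hyNc).2.2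
        exact hne.ne_empty (disjoint_iff_inter_eq_empty.mp hdac)
      have hyb : y ≠ b := by
        intro e; subst e
        have hne : (y ∩ c).Nonempty := (mem_nbrF.mp hyNc).2.2
        exact hne.ne_empty (disjoint_iff_inter_eq_empty.mp hdbc)
      have hyx : y ≠ x := fun e => hxNc (e ▸ hyNc)
      set R := insert t₀ (insert a (insert b (insert c (insert x ({y} : Finset (Finset α)))))) with hRdef
      have hRT : R ⊆ T := insert_subset ht₀ (insert_subset haT (insert_subset hbT
        (insert_subset hcT (insert_subset hxT (by simpa using hyT)))))
      have hR6 : R.card ≤ 6 := by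
        refine (card_insert_le _ _).trans (Nat.succ_le_succ ?_)
        refine (card_insert_le _ _).trans (Nat.succ_le_succ ?_)
        refine (card_insert_le _ _).trans (Nat.succ_le_succ ?_)
        refine (card_insert_le _ _).trans (Nat.succ_le_succ ?_)
        refine (card_insert_le _ _).trans (Nat.succ_le_succ ?_)
        simp
      have haR : a ∈ R := by simp [hRdef]
      have hbR : b ∈ R := by simp [hRdef]
      have hcR : c ∈ R := by simp [hRdef]
      have hxR : x ∈ R := by simp [hRdef]
      have hyR : y ∈ R := by simp [hRdef]
      refine lemL_step ih T hT R hRT ⟨t₀, mem_insert_self _ _⟩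
        {t₀} {(t₀, a), (b, x), (c, y)} (by simp [hRdef]) (by simp) ?_ ?_ ?_ hdeg ?_
      · intro a' ha' s hs hsR
        rw [mem_singleton] at ha'; rw [ha']
        have hst : s ≠ t₀ := fun e => hsR (e ▸ mem_insert_self _ _)
        refine disjoint_of_not_nbr hs hst fun hmem => ?_
        rw [hnbr] at hmem
        rcases mem_insert.mp hmem with h | h
        · exact hsR (h ▸ haR)
        rcases mem_insert.mp h with h' | h'
        · exact hsR (h' ▸ hbR)
        · rw [mem_singleton] at h'; exact hsR (h' ▸ hcR)
      · intro pr hpr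
        rcases mem_insert.mp hpr with h | h
        · subst h
          exact ⟨mem_insert_self _ _, haR, hat.symm,
            inter_nonempty_comm (mem_nbrF.mp haN).2.2⟩
        rcases mem_insert.mp h with h' | h'
        · subst h'
          exact ⟨hbR, hxR, hxb.symm, inter_nonempty_comm (mem_nbrF.mp hxNb).2.2⟩
        · rw [mem_singleton] at h'; subst h'
          exact ⟨hcR, hyR, hyc.symm, inter_nonempty_comm (mem_nbrF.mp hyNc).2.2⟩
      · intro pr hpr qr hqr hne
        have key : ∀ u v : Finset α × Finset α,
            u ∈ ({(t₀, a), (b, x), (c, y)} : Finset (Finset α × Finset α)) →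
            u = (t₀, a) ∨ u = (b, x) ∨ u = (c, y) := by
          intro u v hu
          rcases mem_insert.mp hu with h | h
          · exact Or.inl h
          rcases mem_insert.mp h with h' | h'
          · exact Or.inr (Or.inl h')
          · exact Or.inr (Or.inr (mem_singleton.mp h'))
        rcases key pr pr hpr with h1 | h1 | h1 <;> rcases key qr qr hqr with h2 | h2 | h2 <;>
          subst h1 <;> subst h2 <;> first
          | exact absurd rfl hne
          | exact ⟨hbt.symm, hxt.symm, hab, hxa.symm⟩
          | exact ⟨hct.symm, hyt.symm, hac, hya.symm⟩
          | exact ⟨hbt, hab.symm, hxt, hxa⟩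
          | exact ⟨hbc, hyb.symm, hxc, hyx.symm⟩
          | exact ⟨hct, hac.symm, hyt, hya⟩
          | exact ⟨hbc.symm, hxc.symm, hyb, hyx⟩
      · have hM3 : ({(t₀, a), (b, x), (c, y)} : Finset (Finset α × Finset α)).card = 3 := by
          rw [card_insert_of_notMem, card_insert_of_notMem, card_singleton]
          · intro hmem
            exact hbc (congrArg Prod.fst (mem_singleton.mp hmem))
          · intro hmem
            rcases mem_insert.mp hmem with h | h
            · exact hbt (congrArg Prod.fst h).symm
            · exact hct (congrArg Prod.fst (mem_singleton.mp h)).symm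
        rw [hM3]
        simp only [card_singleton]
        omega

/-- Main abstract lemma: any finite family of nonempty sets of size at most 3 has a
"cover" `C` and a disjoint subfamily `A` with `3|C| ≤ 3|A| + |T|`. -/
lemma lemH : ∀ (n : ℕ) (T : Finset (Finset α)), T.card ≤ n →
    (∀ t ∈ T, t.Nonempty ∧ t.card ≤ 3) →
    ∃ (C : Finset α) (A : Finset (Finset α)),
      (∀ t ∈ T, (t ∩ C).Nonempty) ∧ (∀ e ∈ C, ∃ t ∈ T, e ∈ t) ∧
      A ⊆ T ∧ (∀ a ∈ A, ∀ b ∈ A, a ≠ b → Disjoint a b) ∧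
      3 * C.card ≤ 3 * A.card + T.card := by
  intro n
  induction n with
  | zero =>
    intro T hT _
    have : T = ∅ := card_eq_zero.mp (Nat.le_zero.mp hT)
    subst this
    exact ⟨∅, ∅, by simp, by simp, by simp, by simp, by simp⟩
  | succ n ih =>
    intro T hTc hT
    by_cases hdeg : ∃ x : α, 3 ≤ (T.filter fun t => x ∈ t).card
    · obtain ⟨x, hx⟩ := hdeg
      set T' := T.filter (fun t => x ∉ t) with hT'def
      have hsplit : (T.filter fun t => x ∈ t).card + T'.card = T.card := by
        rw [hT'def]
        exact card_filter_add_card_filter_not (fun t => x ∈ t)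
      have hT'T : T' ⊆ T := filter_subset _ _
      obtain ⟨C', A', hcov', hin', hA'T, hA'pd, hcard'⟩ :=
        ih T' (by omega) (fun t ht => hT t (hT'T ht))
      obtain ⟨t₁, ht₁⟩ := card_pos.mp (show 0 < (T.filter fun t => x ∈ t).card by omega)
      rw [mem_filter] at ht₁
      refine ⟨insert x C', A', ?_, ?_, hA'T.trans hT'T, hA'pd, ?_⟩
      · intro t ht
        by_cases hxt : x ∈ t
        · exact ⟨x, mem_inter.mpr ⟨hxt, mem_insert_self _ _⟩⟩
        · obtain ⟨e, he⟩ := hcov' t (mem_filter.mpr ⟨ht, hxt⟩)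
          rw [mem_inter] at he
          exact ⟨e, mem_inter.mpr ⟨he.1, mem_insert_of_mem he.2⟩⟩
      · intro e he
        rcases mem_insert.mp he with h | h
        · exact ⟨t₁, ht₁.1, h ▸ ht₁.2⟩
        · obtain ⟨t, ht, het⟩ := hin' e h
          exact ⟨t, hT'T ht, het⟩
      · have := card_insert_le x C'
        omega
    · push_neg at hdeg
      rcases T.eq_empty_or_nonempty with rfl | ⟨t₀, ht₀⟩
      · exact ⟨∅, ∅, by simp, by simp, by simp, by simp, by simp⟩
      obtain ⟨a₀, _⟩ := (hT t₀ ht₀).1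
      have hnb : ∀ t ∈ T, (nbrF T t).card ≤ 3 := by
        intro t ht
        have hmaps : ∀ s ∈ nbrF T t,
            (if h : (s ∩ t).Nonempty then h.choose else a₀) ∈ t := by
          intro s hs
          have h := (mem_nbrF.mp hs).2.2
          rw [dif_pos h]
          exact (mem_inter.mp h.choose_spec).2
        have hinj : ∀ s₁ ∈ nbrF T t, ∀ s₂ ∈ nbrF T t,
            (if h : (s₁ ∩ t).Nonempty then h.choose else a₀) =
            (if h : (s₂ ∩ t).Nonempty then h.choose else a₀) → s₁ = s₂ := by
          intro s₁ hs₁ s₂ hs₂ heq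
          by_contra hne
          have h₁ := (mem_nbrF.mp hs₁).2.2
          have h₂ := (mem_nbrF.mp hs₂).2.2
          rw [dif_pos h₁, dif_pos h₂] at heq
          set z := h₁.choose with hzdef
          have hz₁ : z ∈ s₁ ∩ t := h₁.choose_spec
          have hz₂ : z ∈ s₂ ∩ t := heq ▸ h₂.choose_spec
          have hsub : ({t, s₁, s₂} : Finset (Finset α)) ⊆ T.filter fun u => z ∈ u := by
            intro u hu
            rcases mem_insert.mp hu with h | h
            · subst h
              exact mem_filter.mpr ⟨ht, (mem_inter.mp hz₁).2⟩
            rcases mem_insert.mp h with h' | h'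
            · subst h'
              exact mem_filter.mpr ⟨(mem_nbrF.mp hs₁).2.1, (mem_inter.mp hz₁).1⟩
            · rw [mem_singleton] at h'; subst h'
              exact mem_filter.mpr ⟨(mem_nbrF.mp hs₂).2.1, (mem_inter.mp hz₂).1⟩
          have hc3 : ({t, s₁, s₂} : Finset (Finset α)).card = 3 := by
            rw [card_insert_of_notMem, card_insert_of_notMem, card_singleton]
            · simpa using hne
            · simp only [mem_insert, mem_singleton]
              push_neg
              exact ⟨((mem_nbrF.mp hs₁).1).symm, ((mem_nbrF.mp hs₂).1).symm⟩
          have := card_le_card hsub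
          rw [hc3] at this
          exact absurd this (by have := hdeg z; omega)
        calc (nbrF T t).card ≤ t.card := card_le_card_of_injOn _ hmaps hinj
          _ ≤ 3 := (hT t ht).2
      obtain ⟨A, M, hAT, hApd, hMT, hMd, hLcard⟩ := lemL T.card T le_rfl hnb
      set supp := M.biUnion (fun p => ({p.1, p.2} : Finset (Finset α))) with hsuppdef
      have hsuppT : supp ⊆ T := by
        intro t ht
        rw [hsuppdef, mem_biUnion] at ht
        obtain ⟨p, hp, hmem⟩ := ht
        rcases mem_insert.mp hmem with h | h
        · exact h ▸ (hMT p hp).1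
        · exact (mem_singleton.mp h) ▸ (hMT p hp).2.1
      have hsuppcard : supp.card = 2 * M.card := by
        rw [hsuppdef, card_biUnion]
        · rw [Finset.sum_congr rfl (fun p hp => show ({p.1, p.2} : Finset (Finset α)).card = 2 by
            rw [card_insert_of_notMem (by simpa using (hMT p hp).2.2.1), card_singleton]),
            Finset.sum_const, smul_eq_mul]
          ring
        · intro p hp q hq hpq
          have h4 := hMd p hp q hq hpq
          rw [Function.onFun, Finset.disjoint_left]
          intro u hu hu'
          rcases mem_insert.mp hu with h | h <;> rcases mem_insert.mp hu' with h' | h'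
          · exact h4.1 (h ▸ h')
          · exact h4.2.1 (h ▸ mem_singleton.mp h')
          · exact h4.2.2.1 ((mem_singleton.mp h) ▸ h')
          · exact h4.2.2.2 ((mem_singleton.mp h) ▸ mem_singleton.mp h')
      set fM : Finset α × Finset α → α :=
        fun p => if h : (p.1 ∩ p.2).Nonempty then h.choose else a₀ with hfMdef
      set fT : Finset α → α := fun t => if h : t.Nonempty then h.choose else a₀ with hfTdef
      have hfM : ∀ p ∈ M, fM p ∈ p.1 ∩ p.2 := by
        intro p hp
        have h := (hMT p hp).2.2.2
        rw [hfMdef]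
        simp only
        rw [dif_pos h]
        exact h.choose_spec
      have hfT : ∀ t ∈ T, fT t ∈ t := by
        intro t ht
        have h := (hT t ht).1
        rw [hfTdef]
        simp only
        rw [dif_pos h]
        exact h.choose_spec
      set C := M.image fM ∪ (T \ supp).image fT with hCdef
      refine ⟨C, A, ?_, ?_, hAT, hApd, ?_⟩
      · intro t ht
        by_cases hts : t ∈ supp
        · rw [hsuppdef, mem_biUnion] at hts
          obtain ⟨p, hp, hmem⟩ := hts
          have hfMp := hfM p hp
          rw [mem_inter] at hfMp
          have hC : fM p ∈ C := mem_union_left _ (mem_image_of_mem _ hp)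
          rcases mem_insert.mp hmem with h | h
          · exact ⟨fM p, mem_inter.mpr ⟨h ▸ hfMp.1, hC⟩⟩
          · exact ⟨fM p, mem_inter.mpr ⟨(mem_singleton.mp h) ▸ hfMp.2, hC⟩⟩
        · refine ⟨fT t, mem_inter.mpr ⟨hfT t ht, ?_⟩⟩
          exact mem_union_right _ (mem_image_of_mem _ (mem_sdiff.mpr ⟨ht, hts⟩))
      · intro e he
        rcases mem_union.mp he with h | h
        · obtain ⟨p, hp, rfl⟩ := mem_image.mp h
          exact ⟨p.1, (hMT p hp).1, (mem_inter.mp (hfM p hp)).1⟩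
        · obtain ⟨t, ht, rfl⟩ := mem_image.mp h
          have ht' := (mem_sdiff.mp ht).1
          exact ⟨t, ht', hfT t ht'⟩
      · have h1 : C.card ≤ M.card + (T \ supp).card := by
          refine (card_union_le _ _).trans ?_
          exact Nat.add_le_add (card_image_le) (card_image_le)
        have h2 : (T \ supp).card + supp.card = T.card :=
          card_sdiff_add_card_eq_card hsuppT
        omega

end Hyper


section Graph

variable {V : Type*} [DecidableEq V]

lemma mem_triEdges {t : Finset V} {e : Sym2 V} :
    e ∈ triEdges t ↔ ∃ a b, a ∈ t ∧ b ∈ t ∧ a ≠ b ∧ e = s(a, b) := by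
  simp only [triEdges, mem_image, mem_filter, mem_product]
  constructor
  · rintro ⟨⟨a, b⟩, ⟨⟨ha, hb⟩, hab⟩, rfl⟩
    exact ⟨a, b, ha, hb, hab, rfl⟩
  · rintro ⟨a, b, ha, hb, hab, rfl⟩
    exact ⟨(a, b), ⟨⟨ha, hb⟩, hab⟩, rfl⟩

lemma triEdges_card3 {t : Finset V} (h : t.card = 3) :
    (triEdges t).Nonempty ∧ (triEdges t).card ≤ 3 := by
  obtain ⟨x, y, z, hxy, hxz, hyz, rfl⟩ := card_eq_three.mp h
  constructor
  · exact ⟨s(x, y), mem_triEdges.mpr ⟨x, y, by simp, by simp, hxy, rfl⟩⟩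
  · have hsub : triEdges ({x, y, z} : Finset V) ⊆ {s(x, y), s(x, z), s(y, z)} := by
      intro e he
      obtain ⟨a, b, ha, hb, hab, rfl⟩ := mem_triEdges.mp he
      simp only [mem_insert, mem_singleton] at ha hb ⊢
      rcases ha with rfl | rfl | rfl <;> rcases hb with rfl | rfl | rfl <;>
        first
        | exact absurd rfl hab
        | exact Or.inl rfl
        | exact Or.inl Sym2.eq_swap
        | exact Or.inr (Or.inl rfl)
        | exact Or.inr (Or.inl Sym2.eq_swap)
        | exact Or.inr (Or.inr rfl)
        | exact Or.inr (Or.inr Sym2.eq_swap)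
    refine (card_le_card hsub).trans ?_
    refine (card_insert_le _ _).trans (Nat.succ_le_succ ?_)
    refine (card_insert_le _ _).trans (Nat.succ_le_succ ?_)
    simp

lemma triEdges_subset_of_eq {t₁ t₂ : Finset V} (h₁ : t₁.card = 3)
    (h : triEdges t₁ = triEdges t₂) : t₁ ⊆ t₂ := by
  intro w hw
  have hne : (t₁.erase w).Nonempty := by
    rw [← card_pos, card_erase_of_mem hw, h₁]
    norm_num
  obtain ⟨u, hu⟩ := hne
  rw [mem_erase] at hu
  have hmem : s(w, u) ∈ triEdges t₁ :=
    mem_triEdges.mpr ⟨w, u, hw, hu.2, (hu.1).symm, rfl⟩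
  rw [h] at hmem
  obtain ⟨a, b, ha, hb, hab, heq⟩ := mem_triEdges.mp hmem
  rw [Sym2.eq_iff] at heq
  rcases heq with ⟨rfl, rfl⟩ | ⟨rfl, rfl⟩
  · exact ha
  · exact hb

lemma triEdges_inj {t₁ t₂ : Finset V} (h₁ : t₁.card = 3) (h₂ : t₂.card = 3)
    (h : triEdges t₁ = triEdges t₂) : t₁ = t₂ :=
  Finset.Subset.antisymm (triEdges_subset_of_eq h₁ h) (triEdges_subset_of_eq h₂ h.symm)

end Graph


/-- If ν_t(G) ≥ c·|T_G| for some c ∈ (0,1], then τ_t(G) ≤ ((3c+1)/(3c))·ν_t(G). -/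
theorem tauT_le_of_nuT_ge_mul_numTris {V : Type*} [Fintype V] [DecidableEq V]
    (G : SimpleGraph V) (c : ℝ) (hc0 : 0 < c) (hc1 : c ≤ 1)
    (h : (nuT G : ℝ) ≥ c * numTris G) :
    (tauT G : ℝ) ≤ (3 * c + 1) / (3 * c) * nuT G := by
  classical
  have key : 3 * tauT G ≤ 3 * nuT G + numTris G := by
    set tris := Finset.univ.filter (fun t => IsTriangle G t) with htris
    have htris_mem : ∀ t, t ∈ tris ↔ IsTriangle G t := by
      intro t; simp [htris]
    have hnum : numTris G = tris.card := by
      rw [numTris]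
      have hset : {t : Finset V | IsTriangle G t} = ↑tris := by
        ext t; simp [htris]
      rw [hset, Set.ncard_coe_finset]
    set T := tris.image triEdges with hTdef
    have hTprop : ∀ t' ∈ T, t'.Nonempty ∧ t'.card ≤ 3 := by
      intro t' ht'
      obtain ⟨t, ht, rfl⟩ := mem_image.mp ht'
      exact triEdges_card3 ((htris_mem t).mp ht).1
    obtain ⟨C, A, hcov, hCin, hAT, hApd, hkey⟩ := lemH T.card T le_rfl hTprop
    have hCcover : IsTriangleCover G C := by
      constructor
      · intro e he
        obtain ⟨t', ht', het⟩ := hCin e he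
        obtain ⟨t, ht, rfl⟩ := mem_image.mp ht'
        obtain ⟨a, b, ha, hb, hab, rfl⟩ := mem_triEdges.mp het
        exact ((htris_mem t).mp ht).2 a ha b hb hab
      · intro t htri
        have ht : t ∈ tris := (htris_mem t).mpr htri
        obtain ⟨e, he⟩ := hcov (triEdges t) (mem_image_of_mem _ ht)
        rw [mem_inter] at he
        exact ⟨e, he.1, he.2⟩
    have hτ : tauT G ≤ C.card := Nat.sInf_le ⟨C, hCcover, rfl⟩
    set P := tris.filter (fun t => triEdges t ∈ A) with hPdef
    have hAP : A.card ≤ P.card := by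
      apply card_le_card_of_surjOn triEdges
      intro a ha
      rw [Finset.mem_coe] at ha
      obtain ⟨t, ht, rfl⟩ := mem_image.mp (hAT ha)
      exact ⟨t, by rw [Finset.mem_coe, hPdef, mem_filter]; exact ⟨ht, ha⟩, rfl⟩
    have hPpack : IsTrianglePacking G P := by
      constructor
      · intro t ht
        exact (htris_mem t).mp (mem_filter.mp ht).1
      · intro t₁ h₁ t₂ h₂ hne
        have e₁ := (mem_filter.mp h₁).2
        have e₂ := (mem_filter.mp h₂).2
        refine hApd _ e₁ _ e₂ fun heq => hne ?_
        exact triEdges_inj ((htris_mem t₁).mp (mem_filter.mp h₁).1).1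
          ((htris_mem t₂).mp (mem_filter.mp h₂).1).1 heq
    have hbdd : BddAbove {n | ∃ P : Finset (Finset V), IsTrianglePacking G P ∧ P.card = n} := by
      refine ⟨Fintype.card (Finset V), ?_⟩
      rintro nn ⟨Q, _, rfl⟩
      exact card_le_univ Q
    have hν : P.card ≤ nuT G := le_csSup hbdd ⟨P, hPpack, rfl⟩
    have hTcard : T.card ≤ numTris G := by
      rw [hnum]
      exact card_image_le
    omega
  have hpos : (0 : ℝ) < 3 * c := by linarith
  have keyR : 3 * (tauT G : ℝ) ≤ 3 * (nuT G : ℝ) + (numTris G : ℝ) := by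
    exact_mod_cast key
  rw [ge_iff_le] at h
  rw [div_mul_eq_mul_div, le_div_iff₀ hpos]
  nlinarith [keyR, h, hc0.le, mul_le_mul_of_nonneg_left keyR hc0.le]
end

section
/- If G is a graph satisfying ν_t(G) ≥ |T_G|/3, where T_G is the set of triangles of G, then τ_t(G) ≤ 2·ν_t(G). -/
lemma mem_triEdges_iff {V : Type*} [DecidableEq V] {t : Finset V} {e : Sym2 V} :
    e ∈ triEdges t ↔ ∃ x y, x ∈ t ∧ y ∈ t ∧ x ≠ y ∧ e = s(x, y) := by
  simp only [triEdges, Finset.mem_image, Finset.mem_filter, Finset.mem_product, Prod.exists]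
  constructor
  · rintro ⟨x, y, ⟨⟨hx, hy⟩, hne⟩, rfl⟩
    exact ⟨x, y, hx, hy, hne, rfl⟩
  · rintro ⟨x, y, hx, hy, hne, rfl⟩
    exact ⟨x, y, ⟨⟨hx, hy⟩, hne⟩, rfl⟩

lemma triEdges_mem_edgeSet {V : Type*} [DecidableEq V] {G : SimpleGraph V} {t : Finset V}
    (ht : IsTriangle G t) {e : Sym2 V} (he : e ∈ triEdges t) : e ∈ G.edgeSet := by
  obtain ⟨x, y, hx, hy, hne, rfl⟩ := mem_triEdges_iff.mp he
  exact ht.2 x hx y hy hne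

lemma exists_triEdge {V : Type*} [DecidableEq V] {G : SimpleGraph V} {t : Finset V}
    (ht : IsTriangle G t) : ∃ e, e ∈ triEdges t := by
  have h1 : 1 < t.card := by rw [ht.1]; norm_num
  obtain ⟨a, ha, b, hb, hne⟩ := Finset.one_lt_card.mp h1
  exact ⟨s(a, b), mem_triEdges_iff.mpr ⟨a, b, ha, hb, hne, rfl⟩⟩

lemma key_lemma {V : Type*} [DecidableEq V] (G : SimpleGraph V) :
    ∀ S : Finset (Finset V), (∀ t ∈ S, IsTriangle G t) →
    ∃ (C : Finset (Sym2 V)) (P : Finset (Finset V)),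
      (∀ e ∈ C, e ∈ G.edgeSet) ∧ (∀ t ∈ S, ∃ e ∈ triEdges t, e ∈ C) ∧
      IsTrianglePacking G P ∧ 2 * C.card ≤ S.card + P.card := by
  intro S
  induction S using Finset.strongInduction with
  | _ S ih =>
    intro hS
    by_cases hx : ∃ t₁ ∈ S, ∃ t₂ ∈ S, t₁ ≠ t₂ ∧ ¬ Disjoint (triEdges t₁) (triEdges t₂)
    · obtain ⟨t₁, h1, t₂, h2, hne, hnd⟩ := hx
      obtain ⟨e, he1, he2⟩ := Finset.not_disjoint_iff.mp hnd
      set S' := S \ {t₁, t₂} with hS'def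
      have hsub : S' ⊂ S := by
        refine Finset.ssubset_iff_of_subset (Finset.sdiff_subset) |>.mpr ?_
        exact ⟨t₁, h1, by simp [hS'def]⟩
      obtain ⟨C', P', hCE, hCov, hP, hcard⟩ :=
        ih S' hsub (fun t ht => hS t (Finset.mem_sdiff.mp ht).1)
      refine ⟨insert e C', P', ?_, ?_, hP, ?_⟩
      · intro f hf
        rcases Finset.mem_insert.mp hf with rfl | hf
        · exact triEdges_mem_edgeSet (hS t₁ h1) he1
        · exact hCE f hf
      · intro t ht
        by_cases h : t = t₁ ∨ t = t₂
        · rcases h with rfl | rfl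
          · exact ⟨e, he1, Finset.mem_insert_self _ _⟩
          · exact ⟨e, he2, Finset.mem_insert_self _ _⟩
        · push_neg at h
          obtain ⟨f, hf1, hf2⟩ := hCov t (Finset.mem_sdiff.mpr ⟨ht, by simp [h.1, h.2]⟩)
          exact ⟨f, hf1, Finset.mem_insert_of_mem hf2⟩
      · have h2' : ({t₁, t₂} : Finset (Finset V)).card = 2 := Finset.card_pair hne
        have hsub2 : ({t₁, t₂} : Finset (Finset V)) ⊆ S := by
          intro x hx'; rcases Finset.mem_insert.mp hx' with rfl | hx'
          · exact h1
          · exact Finset.mem_singleton.mp hx' ▸ h2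
        have hc : S'.card + 2 = S.card := by
          rw [hS'def, ← h2']; exact Finset.card_sdiff_add_card_eq_card hsub2
        have := Finset.card_insert_le e C'
        omega
    · push_neg at hx
      have hpack : IsTrianglePacking G S := ⟨hS, hx⟩
      refine ⟨S.attach.image (fun x => (exists_triEdge (hS x.1 x.2)).choose), S, ?_, ?_, hpack, ?_⟩
      · intro f hf
        obtain ⟨x, _, rfl⟩ := Finset.mem_image.mp hf
        exact triEdges_mem_edgeSet (hS x.1 x.2)
          (exists_triEdge (hS x.1 x.2)).choose_spec
      · intro t ht
        exact ⟨(exists_triEdge (hS t ht)).choose, (exists_triEdge (hS t ht)).choose_spec,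
          Finset.mem_image.mpr ⟨⟨t, ht⟩, Finset.mem_attach _ _, rfl⟩⟩
      · have := Finset.card_image_le (s := S.attach)
          (f := fun x => (exists_triEdge (hS x.1 x.2)).choose)
        rw [Finset.card_attach] at this
        omega

/-- If ν_t(G) ≥ |T_G|/3 then τ_t(G) ≤ 2·ν_t(G). -/
theorem tauT_le_two_nuT_of_third {V : Type*} [Fintype V] [DecidableEq V]
    (G : SimpleGraph V) (h : (nuT G : ℝ) ≥ (numTris G : ℝ) / 3) :
    tauT G ≤ 2 * nuT G := by
  classical
  have hfin : {t : Finset V | IsTriangle G t}.Finite := Set.toFinite _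
  set S := hfin.toFinset with hSdef
  have hmem : ∀ t ∈ S, IsTriangle G t := fun t ht => hfin.mem_toFinset.mp ht
  obtain ⟨C, P, hCE, hCov, hP, hcard⟩ := key_lemma G S hmem
  have hm : numTris G = S.card := Set.ncard_eq_toFinset_card _ hfin
  -- τ ≤ C.card
  have htau : tauT G ≤ C.card := by
    apply Nat.sInf_le
    exact ⟨C, ⟨hCE, fun t ht => hCov t (hfin.mem_toFinset.mpr ht)⟩, rfl⟩
  -- P.card ≤ ν
  have hbdd : BddAbove {n | ∃ P : Finset (Finset V), IsTrianglePacking G P ∧ P.card = n} := by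
    refine ⟨Fintype.card (Finset V), ?_⟩
    rintro n ⟨Q, _, rfl⟩
    exact Finset.card_le_univ Q
  have hnu : P.card ≤ nuT G := le_csSup hbdd ⟨P, hP, rfl⟩
  -- numTris ≤ 3 * nuT
  have h3 : numTris G ≤ 3 * nuT G := by
    have h' := (div_le_iff₀ (by norm_num : (0:ℝ) < 3)).mp h
    have : (numTris G : ℝ) ≤ ((3 * nuT G : ℕ) : ℝ) := by push_cast; linarith
    exact_mod_cast this
  omega
end

section
/- If G = (V, E) is an irreducible graph (every edge lies in a triangle) such that |E| ≥ 2·|T_G|, then τ_t(G) ≤ 2·ν_t(G). -/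
set_option linter.unusedSectionVars false
set_option linter.unreachableTactic false
set_option linter.unusedTactic false
set_option linter.unusedVariables false
set_option maxHeartbeats 1000000

namespace TuzaAux

open Finset

variable {V : Type*} [Fintype V] [DecidableEq V] (G : SimpleGraph V)

lemma mem_triEdges_iff {t : Finset V} {e : Sym2 V} :
    e ∈ triEdges t ↔ ∃ u ∈ t, ∃ v ∈ t, u ≠ v ∧ e = s(u, v) := by
  constructor
  · intro h
    simp only [triEdges, Finset.mem_image, Finset.mem_filter, Finset.mem_product] at h
    obtain ⟨⟨u, v⟩, ⟨⟨hu, hv⟩, hne⟩, rfl⟩ := h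
    exact ⟨u, hu, v, hv, hne, rfl⟩
  · rintro ⟨u, hu, v, hv, hne, rfl⟩
    simp only [triEdges, Finset.mem_image, Finset.mem_filter, Finset.mem_product]
    exact ⟨⟨u, v⟩, ⟨⟨hu, hv⟩, hne⟩, rfl⟩

lemma mem_triEdges_mk {t : Finset V} {u v : V} (hu : u ∈ t) (hv : v ∈ t) (hne : u ≠ v) :
    s(u,v) ∈ triEdges t := mem_triEdges_iff.mpr ⟨u, hu, v, hv, hne, rfl⟩

lemma mem_of_mem_triEdges {t : Finset V} {u v : V} (h : s(u,v) ∈ triEdges t) :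
    u ∈ t ∧ v ∈ t := by
  rw [mem_triEdges_iff] at h
  obtain ⟨a, ha, b, hb, hne, he⟩ := h
  rw [Sym2.eq_iff] at he
  rcases he with ⟨rfl, rfl⟩ | ⟨rfl, rfl⟩
  exacts [⟨ha, hb⟩, ⟨hb, ha⟩]

lemma triEdges_explicit {x y z : V} (hxy : x ≠ y) (hxz : x ≠ z) (hyz : y ≠ z) :
    triEdges ({x, y, z} : Finset V) = {s(x,y), s(x,z), s(y,z)} := by
  ext e
  simp only [mem_triEdges_iff, Finset.mem_insert, Finset.mem_singleton]
  constructor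
  · rintro ⟨u, hu, v, hv, hne, rfl⟩
    rcases hu with rfl | rfl | rfl <;> rcases hv with rfl | rfl | rfl <;>
      first
        | exact absurd rfl hne
        | simp [Sym2.eq_iff] <;> tauto
  · rintro (rfl | rfl | rfl)
    · exact ⟨x, by simp, y, by simp, hxy, rfl⟩
    · exact ⟨x, by simp, z, by simp, hxz, rfl⟩
    · exact ⟨y, by simp, z, by simp, hyz, rfl⟩

lemma card_triEdges {t : Finset V} (h : t.card = 3) : (triEdges t).card = 3 := by
  obtain ⟨x, y, z, hxy, hxz, hyz, rfl⟩ := Finset.card_eq_three.mp h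
  rw [triEdges_explicit hxy hxz hyz]
  rw [Finset.card_insert_of_notMem, Finset.card_insert_of_notMem, Finset.card_singleton]
  · simp only [Finset.mem_singleton, Sym2.eq_iff]
    tauto
  · simp only [Finset.mem_insert, Finset.mem_singleton, Sym2.eq_iff]
    push_neg
    constructor <;> tauto

lemma triEdges_nonempty {t : Finset V} (h : t.card = 3) : (triEdges t).Nonempty := by
  rw [← Finset.card_pos, card_triEdges h]; norm_num

lemma triangle_eq_of_two_shared {B C : Finset V} (hB : B.card = 3) (hC : C.card = 3)
    {e₁ e₂ : Sym2 V} (hne : e₁ ≠ e₂)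
    (h1B : e₁ ∈ triEdges B) (h1C : e₁ ∈ triEdges C)
    (h2B : e₂ ∈ triEdges B) (h2C : e₂ ∈ triEdges C) : B = C := by
  obtain ⟨u, huB, v, hvB, huv, rfl⟩ := mem_triEdges_iff.mp h1B
  obtain ⟨p, hpB, q, hqB, hpq, rfl⟩ := mem_triEdges_iff.mp h2B
  obtain ⟨huC, hvC⟩ := mem_of_mem_triEdges h1C
  obtain ⟨hpC, hqC⟩ := mem_of_mem_triEdges h2C
  have hw : ∃ w, w ∈ B ∧ w ∈ C ∧ w ≠ u ∧ w ≠ v := by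
    by_cases hp : p = u ∨ p = v
    · by_cases hq : q = u ∨ q = v
      · exfalso
        rcases hp with rfl | rfl <;> rcases hq with rfl | rfl
        · exact hpq rfl
        · exact hne rfl
        · exact hne (Sym2.eq_swap)
        · exact hpq rfl
      · push_neg at hq
        exact ⟨q, hqB, hqC, hq.1, hq.2⟩
    · push_neg at hp
      exact ⟨p, hpB, hpC, hp.1, hp.2⟩
  obtain ⟨w, hwB, hwC, hwu, hwv⟩ := hw
  have hcard : ({u, v, w} : Finset V).card = 3 := by
    rw [Finset.card_insert_of_notMem, Finset.card_insert_of_notMem, Finset.card_singleton]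
    · simp [hwv.symm]
    · simp [huv, hwu.symm]
  have hsubB : ({u, v, w} : Finset V) ⊆ B := by
    intro a ha; simp only [Finset.mem_insert, Finset.mem_singleton] at ha
    rcases ha with rfl | rfl | rfl <;> assumption
  have hsubC : ({u, v, w} : Finset V) ⊆ C := by
    intro a ha; simp only [Finset.mem_insert, Finset.mem_singleton] at ha
    rcases ha with rfl | rfl | rfl <;> assumption
  have hBeq := Finset.eq_of_subset_of_card_le hsubB (by rw [hB, hcard])
  have hCeq := Finset.eq_of_subset_of_card_le hsubC (by rw [hC, hcard])
  rw [← hBeq, ← hCeq]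

open Classical in
noncomputable def triSet (S : Finset (Sym2 V)) : Finset (Finset V) :=
  Finset.univ.filter (fun t => IsTriangle G t ∧ triEdges t ⊆ S)

noncomputable def eS (S : Finset (Sym2 V)) : Finset (Sym2 V) :=
  (triSet G S).biUnion triEdges

lemma mem_triSet_iff {S : Finset (Sym2 V)} {t : Finset V} :
    t ∈ triSet G S ↔ IsTriangle G t ∧ triEdges t ⊆ S := by
  classical
  simp [triSet]

lemma card3_of_mem_triSet {S : Finset (Sym2 V)} {t : Finset V} (h : t ∈ triSet G S) :
    t.card = 3 := ((mem_triSet_iff G).mp h).1.1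

lemma triSet_mono {S S' : Finset (Sym2 V)} (h : S' ⊆ S) : triSet G S' ⊆ triSet G S := by
  intro t ht
  rw [mem_triSet_iff] at ht ⊢
  exact ⟨ht.1, ht.2.trans h⟩

lemma eS_mono {S S' : Finset (Sym2 V)} (h : S' ⊆ S) : eS G S' ⊆ eS G S := by
  intro e he
  rw [eS, Finset.mem_biUnion] at he ⊢
  obtain ⟨t, ht, het⟩ := he
  exact ⟨t, triSet_mono G h ht, het⟩

lemma mem_eS_iff {S : Finset (Sym2 V)} {e : Sym2 V} :
    e ∈ eS G S ↔ ∃ T ∈ triSet G S, e ∈ triEdges T := Finset.mem_biUnion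

lemma eS_subset {S : Finset (Sym2 V)} : eS G S ⊆ S := by
  intro e he
  obtain ⟨T, hT, heT⟩ := (mem_eS_iff G).mp he
  exact ((mem_triSet_iff G).mp hT).2 heT

lemma triEdges_subset_eS {S : Finset (Sym2 V)} {T : Finset V} (h : T ∈ triSet G S) :
    triEdges T ⊆ eS G S := fun e he => (mem_eS_iff G).mpr ⟨T, h, he⟩

lemma edge_mem_edgeSet {t : Finset V} (ht : IsTriangle G t) {e : Sym2 V}
    (he : e ∈ triEdges t) : e ∈ G.edgeSet := by
  obtain ⟨u, hu, v, hv, hne, rfl⟩ := mem_triEdges_iff.mp he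
  exact ht.2 u hu v hv hne

/-- The conclusion of the main induction. -/
def Concl (S : Finset (Sym2 V)) : Prop :=
  ∃ P : Finset (Finset V), ∃ C : Finset (Sym2 V),
    P ⊆ triSet G S ∧
    (∀ t₁ ∈ P, ∀ t₂ ∈ P, t₁ ≠ t₂ → Disjoint (triEdges t₁) (triEdges t₂)) ∧
    C ⊆ eS G S ∧
    (∀ T ∈ triSet G S, ∃ e ∈ triEdges T, e ∈ C) ∧
    C.card + (eS G S).card ≤ 2 * P.card + max ((eS G S).card) (2 * (triSet G S).card)

open Classical in
/-- Triangles destroyed by deleting the edges of `T₀`. -/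
noncomputable def destr (S : Finset (Sym2 V)) (T₀ : Finset V) : Finset (Finset V) :=
  (triSet G S).filter (fun B => ¬ Disjoint (triEdges T₀) (triEdges B))

lemma mem_destr_iff {S : Finset (Sym2 V)} {T₀ B : Finset V} :
    B ∈ destr G S T₀ ↔ B ∈ triSet G S ∧ ¬ Disjoint (triEdges T₀) (triEdges B) := by
  classical
  simp [destr]

lemma destr_subset {S : Finset (Sym2 V)} {T₀ : Finset V} : destr G S T₀ ⊆ triSet G S :=
  Finset.filter_subset _ _

lemma mem_destr_self {S : Finset (Sym2 V)} {T₀ : Finset V} (hT₀ : T₀ ∈ triSet G S) :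
    T₀ ∈ destr G S T₀ := by
  rw [mem_destr_iff]
  refine ⟨hT₀, ?_⟩
  obtain ⟨e, he⟩ := triEdges_nonempty (card3_of_mem_triSet G hT₀)
  exact fun hd => (Finset.disjoint_left.mp hd he) he

lemma shared_edge {S : Finset (Sym2 V)} {T₀ B : Finset V} (hB : B ∈ destr G S T₀) :
    ∃ h, h ∈ triEdges T₀ ∧ h ∈ triEdges B := by
  have := ((mem_destr_iff G).mp hB).2
  rw [Finset.not_disjoint_iff] at this
  exact this

lemma triSet_sdiff {S : Finset (Sym2 V)} {T₀ : Finset V} :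
    triSet G (S \ triEdges T₀) = triSet G S \ destr G S T₀ := by
  ext B
  simp only [Finset.mem_sdiff, mem_triSet_iff, mem_destr_iff, Finset.subset_sdiff]
  constructor
  · rintro ⟨h1, h2, h3⟩
    exact ⟨⟨h1, h2⟩, fun hc => hc.2 (Disjoint.symm h3)⟩
  · rintro ⟨⟨h1, h2⟩, h3⟩
    refine ⟨h1, h2, ?_⟩
    by_contra hd
    exact h3 ⟨⟨h1, h2⟩, fun hdd => hd (Disjoint.symm hdd)⟩

lemma sdiff_tri_card_le_two {S : Finset (Sym2 V)} {T₀ B : Finset V}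
    (hB : B ∈ destr G S T₀) : (triEdges B \ triEdges T₀).card ≤ 2 := by
  obtain ⟨h₀, hh₀, hh₀B⟩ := shared_edge G hB
  have hsub : triEdges B \ triEdges T₀ ⊆ (triEdges B).erase h₀ := by
    intro a ha
    rw [Finset.mem_sdiff] at ha
    rw [Finset.mem_erase]
    exact ⟨fun hc => ha.2 (hc ▸ hh₀), ha.1⟩
  calc (triEdges B \ triEdges T₀).card ≤ ((triEdges B).erase h₀).card :=
        Finset.card_le_card hsub
    _ = (triEdges B).card - 1 := Finset.card_erase_of_mem hh₀B
    _ ≤ 2 := by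
        rw [card_triEdges (card3_of_mem_triSet G (destr_subset G hB))]

lemma eS_decomp {S : Finset (Sym2 V)} {T₀ : Finset V} :
    eS G S ⊆ eS G (S \ triEdges T₀) ∪ triEdges T₀ ∪
      (destr G S T₀).biUnion (fun B => triEdges B \ triEdges T₀) := by
  intro h hh
  obtain ⟨T, hT, hhT⟩ := (mem_eS_iff G).mp hh
  simp only [Finset.mem_union, Finset.mem_biUnion]
  by_cases hX : h ∈ triEdges T₀
  · exact Or.inl (Or.inr hX)
  by_cases hT' : T ∈ triSet G (S \ triEdges T₀)
  · exact Or.inl (Or.inl ((mem_eS_iff G).mpr ⟨T, hT', hhT⟩))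
  · refine Or.inr ⟨T, ?_, Finset.mem_sdiff.mpr ⟨hhT, hX⟩⟩
    rw [triSet_sdiff] at hT'
    rw [Finset.mem_sdiff] at hT'
    by_contra hc
    exact hT' ⟨hT, hc⟩

lemma omega_card {S : Finset (Sym2 V)} {T₀ : Finset V} (hT₀ : T₀ ∈ triSet G S) :
    ((destr G S T₀).biUnion (fun B => triEdges B \ triEdges T₀)).card ≤
      2 * ((destr G S T₀).card - 1) := by
  calc ((destr G S T₀).biUnion (fun B => triEdges B \ triEdges T₀)).card
      ≤ ∑ B ∈ destr G S T₀, (triEdges B \ triEdges T₀).card :=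
        Finset.card_biUnion_le
    _ = ∑ B ∈ (destr G S T₀).erase T₀, (triEdges B \ triEdges T₀).card
        + (triEdges T₀ \ triEdges T₀).card :=
        (Finset.sum_erase_add _ _ (mem_destr_self G hT₀)).symm
    _ = ∑ B ∈ (destr G S T₀).erase T₀, (triEdges B \ triEdges T₀).card := by
        simp
    _ ≤ ((destr G S T₀).erase T₀).card * 2 := by
        refine Finset.sum_le_card_nsmul _ _ 2 ?_
        intro B hB
        exact sdiff_tri_card_le_two G (Finset.mem_of_mem_erase hB)
    _ = 2 * ((destr G S T₀).card - 1) := by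
        rw [Finset.card_erase_of_mem (mem_destr_self G hT₀), Nat.mul_comm]

/-- The uniform induction step. -/
lemma step {n : ℕ} (IH : ∀ S : Finset (Sym2 V), (triSet G S).card ≤ n → Concl G S)
    (S : Finset (Sym2 V)) (T₀ : Finset V) (hT₀ : T₀ ∈ triSet G S)
    (hn : (triSet G S).card ≤ n + 1)
    (CE : Finset (Sym2 V)) (hCE : CE ⊆ triEdges T₀) (hCEcard : CE.card ≤ 2)
    (hcover : ∀ B ∈ destr G S T₀, ∃ h ∈ triEdges B, h ∈ CE)
    (hkey : (eS G S).card + 2 * (triSet G (S \ triEdges T₀)).card + CE.card ≤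
      (eS G (S \ triEdges T₀)).card + 2 * (triSet G S).card + 2) :
    Concl G S := by
  set S' := S \ triEdges T₀ with hS'
  have hsub : triSet G S' ⊆ (triSet G S).erase T₀ := by
    intro T hT
    rw [triSet_sdiff] at hT
    rw [Finset.mem_sdiff] at hT
    refine Finset.mem_erase.mpr ⟨?_, hT.1⟩
    rintro rfl
    exact hT.2 (mem_destr_self G hT.1)
  have htlt : (triSet G S').card < (triSet G S).card := by
    calc (triSet G S').card ≤ ((triSet G S).erase T₀).card := Finset.card_le_card hsub
      _ < (triSet G S).card := by
          rw [Finset.card_erase_of_mem hT₀]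
          have : 0 < (triSet G S).card := Finset.card_pos.mpr ⟨T₀, hT₀⟩
          omega
  obtain ⟨P', C', hP'sub, hP'dis, hC'sub, hC'cov, hbound⟩ := IH S' (by omega)
  have hT₀notP' : T₀ ∉ P' := by
    intro hc
    have := hsub (hP'sub hc)
    exact (Finset.mem_erase.mp this).1 rfl
  refine ⟨insert T₀ P', C' ∪ CE, ?_, ?_, ?_, ?_, ?_⟩
  · intro T hT
    rcases Finset.mem_insert.mp hT with rfl | hT
    · exact hT₀
    · exact triSet_mono G Finset.sdiff_subset (hP'sub hT)
  · have hdisT₀ : ∀ T ∈ P', Disjoint (triEdges T₀) (triEdges T) := by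
      intro T hT
      rw [Finset.disjoint_right]
      intro a haT haT₀
      have : triEdges T ⊆ S' := ((mem_triSet_iff G).mp (hP'sub hT)).2
      exact (Finset.mem_sdiff.mp (this haT)).2 haT₀
    intro t₁ ht₁ t₂ ht₂ hne
    rcases Finset.mem_insert.mp ht₁ with h₁ | h₁ <;>
      rcases Finset.mem_insert.mp ht₂ with h₂ | h₂
    · exact absurd (h₁.trans h₂.symm) hne
    · subst h₁; exact hdisT₀ _ h₂
    · subst h₂; exact (hdisT₀ _ h₁).symm
    · exact hP'dis _ h₁ _ h₂ hne
  · intro a ha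
    rcases Finset.mem_union.mp ha with ha | ha
    · exact eS_mono G Finset.sdiff_subset (hC'sub ha)
    · exact triEdges_subset_eS G hT₀ (hCE ha)
  · intro T hT
    by_cases hd : T ∈ destr G S T₀
    · obtain ⟨h, hh1, hh2⟩ := hcover T hd
      exact ⟨h, hh1, Finset.mem_union_right _ hh2⟩
    · have hT' : T ∈ triSet G S' := by
        rw [triSet_sdiff, Finset.mem_sdiff]
        exact ⟨hT, hd⟩
      obtain ⟨e, he1, he2⟩ := hC'cov T hT'
      exact ⟨e, he1, Finset.mem_union_left _ he2⟩
  · have h1 : (C' ∪ CE).card ≤ C'.card + CE.card := Finset.card_union_le _ _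
    have h2 : (insert T₀ P').card = P'.card + 1 := Finset.card_insert_of_notMem hT₀notP'
    have hmax1 : 2 * (triSet G S).card ≤ max ((eS G S).card) (2 * (triSet G S).card) :=
      le_max_right _ _
    have hmax2 : (eS G S).card ≤ max ((eS G S).card) (2 * (triSet G S).card) :=
      le_max_left _ _
    rcases max_choice ((eS G S').card) (2 * (triSet G S').card) with hm | hm <;>
      rw [hm] at hbound <;> omega

open Classical in
/-- Pick one edge of a triangle. -/
noncomputable def pickE (T : Finset V) : Finset (Sym2 V) :=
  if h : (triEdges T).Nonempty then {h.choose} else ∅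

lemma pickE_subset {T : Finset V} : pickE T ⊆ triEdges T := by
  unfold pickE
  split
  · next h =>
      intro e he
      rw [Finset.mem_singleton] at he
      subst he
      exact h.choose_spec
  · exact Finset.empty_subset _

lemma pickE_card_le {T : Finset V} : (pickE T).card ≤ 1 := by
  unfold pickE
  split <;> simp

lemma pickE_nonempty {T : Finset V} (h : (triEdges T).Nonempty) : (pickE T).Nonempty := by
  unfold pickE
  rw [dif_pos h]
  exact Finset.singleton_nonempty _

/-- Case 3: every triangle edge lies in at least two triangles. -/
lemma case3 (S : Finset (Sym2 V))
    (hmin2 : ∀ h ∈ eS G S, ∃ T₁ ∈ triSet G S, ∃ T₂ ∈ triSet G S,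
      T₁ ≠ T₂ ∧ h ∈ triEdges T₁ ∧ h ∈ triEdges T₂) :
    Concl G S := by
  classical
  set PK := ((triSet G S).powerset.filter
    (fun P => ∀ t₁ ∈ P, ∀ t₂ ∈ P, t₁ ≠ t₂ → Disjoint (triEdges t₁) (triEdges t₂))) with hPK
  have hemp : ∅ ∈ PK := by simp [hPK]
  obtain ⟨P, hPPK, hPmax⟩ := Finset.exists_max_image PK Finset.card ⟨∅, hemp⟩
  rw [hPK, Finset.mem_filter, Finset.mem_powerset] at hPPK
  obtain ⟨hPsub, hPdis⟩ := hPPK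
  have hmx : ∀ T ∈ triSet G S, T ∉ P → ∃ T' ∈ P, ¬ Disjoint (triEdges T) (triEdges T') := by
    intro T hT hTP
    by_contra hc
    push_neg at hc
    have hins : insert T P ∈ PK := by
      rw [hPK, Finset.mem_filter, Finset.mem_powerset]
      refine ⟨Finset.insert_subset hT hPsub, ?_⟩
      intro t₁ ht₁ t₂ ht₂ hne
      rcases Finset.mem_insert.mp ht₁ with h₁ | h₁ <;>
        rcases Finset.mem_insert.mp ht₂ with h₂ | h₂
      · exact absurd (h₁.trans h₂.symm) hne
      · subst h₁; exact hc _ h₂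
      · subst h₂; exact (hc _ h₁).symm
      · exact hPdis _ h₁ _ h₂ hne
    have := hPmax _ hins
    rw [Finset.card_insert_of_notMem hTP] at this
    omega
  set NN := triSet G S \ P with hNN
  set EP := P.biUnion triEdges with hEP
  set M := eS G S \ EP with hM
  have hEPcard : EP.card ≤ 3 * P.card := by
    calc EP.card ≤ ∑ T ∈ P, (triEdges T).card := Finset.card_biUnion_le
      _ ≤ P.card * 3 := by
          refine Finset.sum_le_card_nsmul _ _ 3 ?_
          intro T hT
          rw [card_triEdges (card3_of_mem_triSet G (hPsub hT))]
      _ = 3 * P.card := Nat.mul_comm _ _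
  have hMN2 : ∀ h ∈ M, 2 ≤ (NN.filter (fun B => h ∈ triEdges B)).card := by
    intro h hh
    rw [hM, Finset.mem_sdiff] at hh
    obtain ⟨T₁, hT₁, T₂, hT₂, hne, he₁, he₂⟩ := hmin2 h hh.1
    have hnotP : ∀ T ∈ triSet G S, h ∈ triEdges T → T ∉ P := by
      intro T _ heT hTP
      exact hh.2 (Finset.mem_biUnion.mpr ⟨T, hTP, heT⟩)
    have h₁ : T₁ ∈ NN.filter (fun B => h ∈ triEdges B) := by
      rw [Finset.mem_filter, hNN, Finset.mem_sdiff]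
      exact ⟨⟨hT₁, hnotP _ hT₁ he₁⟩, he₁⟩
    have h₂ : T₂ ∈ NN.filter (fun B => h ∈ triEdges B) := by
      rw [Finset.mem_filter, hNN, Finset.mem_sdiff]
      exact ⟨⟨hT₂, hnotP _ hT₂ he₂⟩, he₂⟩
    exact Finset.one_lt_card.mpr ⟨T₁, h₁, T₂, h₂, hne⟩
  have hB2 : ∀ B ∈ NN, (M.filter (fun h => h ∈ triEdges B)).card ≤ 2 := by
    intro B hB
    rw [hNN, Finset.mem_sdiff] at hB
    obtain ⟨T', hT'P, hnd⟩ := hmx B hB.1 hB.2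
    obtain ⟨h₀, h₀B, h₀T'⟩ := Finset.not_disjoint_iff.mp hnd
    have h₀EP : h₀ ∈ EP := Finset.mem_biUnion.mpr ⟨T', hT'P, h₀T'⟩
    have hsub : M.filter (fun h => h ∈ triEdges B) ⊆ (triEdges B).erase h₀ := by
      intro a ha
      rw [Finset.mem_filter] at ha
      rw [Finset.mem_erase]
      refine ⟨?_, ha.2⟩
      rintro rfl
      exact (Finset.mem_sdiff.mp ha.1).2 h₀EP
    calc (M.filter (fun h => h ∈ triEdges B)).card ≤ ((triEdges B).erase h₀).card :=
          Finset.card_le_card hsub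
      _ = (triEdges B).card - 1 := Finset.card_erase_of_mem h₀B
      _ ≤ 2 := by rw [card_triEdges (card3_of_mem_triSet G hB.1)]
  have hdc : ∑ h ∈ M, (NN.filter (fun B => h ∈ triEdges B)).card
      = ∑ B ∈ NN, (M.filter (fun h => h ∈ triEdges B)).card := by
    have l1 : ∀ h : Sym2 V, (NN.filter (fun B => h ∈ triEdges B)).card
        = ∑ B ∈ NN, if h ∈ triEdges B then 1 else 0 := by
      intro h; rw [Finset.card_filter]
    have l2 : ∀ B : Finset V, (M.filter (fun h => h ∈ triEdges B)).card
        = ∑ h ∈ M, if h ∈ triEdges B then 1 else 0 := by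
      intro B; rw [Finset.card_filter]
    calc ∑ h ∈ M, (NN.filter (fun B => h ∈ triEdges B)).card
        = ∑ h ∈ M, ∑ B ∈ NN, if h ∈ triEdges B then 1 else 0 := by
          exact Finset.sum_congr rfl (fun h _ => l1 h)
      _ = ∑ B ∈ NN, ∑ h ∈ M, if h ∈ triEdges B then 1 else 0 := Finset.sum_comm
      _ = ∑ B ∈ NN, (M.filter (fun h => h ∈ triEdges B)).card := by
          exact Finset.sum_congr rfl (fun B _ => (l2 B).symm)
  have hMcard : M.card ≤ NN.card := by
    have c1 : 2 * M.card ≤ ∑ h ∈ M, (NN.filter (fun B => h ∈ triEdges B)).card := by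
      calc 2 * M.card = ∑ _h ∈ M, 2 := by rw [Finset.sum_const, smul_eq_mul, Nat.mul_comm]
        _ ≤ _ := Finset.sum_le_sum hMN2
    have c2 : ∑ B ∈ NN, (M.filter (fun h => h ∈ triEdges B)).card ≤ NN.card * 2 :=
      Finset.sum_le_card_nsmul _ _ 2 hB2
    rw [hdc] at c1
    omega
  have hNNcard : NN.card + P.card = (triSet G S).card :=
    Finset.card_sdiff_add_card_eq_card hPsub
  have hm_le : (eS G S).card ≤ EP.card + M.card := by
    have : eS G S ⊆ EP ∪ M := by
      intro h hh
      by_cases hEPh : h ∈ EP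
      · exact Finset.mem_union_left _ hEPh
      · exact Finset.mem_union_right _ (Finset.mem_sdiff.mpr ⟨hh, hEPh⟩)
    calc (eS G S).card ≤ (EP ∪ M).card := Finset.card_le_card this
      _ ≤ EP.card + M.card := Finset.card_union_le _ _
  set C := (triSet G S).biUnion pickE with hC
  have hCcard : C.card ≤ (triSet G S).card := by
    calc C.card ≤ ∑ T ∈ triSet G S, (pickE T).card := Finset.card_biUnion_le
      _ ≤ (triSet G S).card * 1 :=
          Finset.sum_le_card_nsmul _ _ 1 (fun T _ => pickE_card_le)
      _ = (triSet G S).card := Nat.mul_one _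
  have hCcov : ∀ T ∈ triSet G S, ∃ e ∈ triEdges T, e ∈ C := by
    intro T hT
    obtain ⟨e, he⟩ := pickE_nonempty (triEdges_nonempty (card3_of_mem_triSet G hT))
    exact ⟨e, pickE_subset he, Finset.mem_biUnion.mpr ⟨T, hT, he⟩⟩
  have hCsub : C ⊆ eS G S := by
    intro e he
    obtain ⟨T, hT, heT⟩ := Finset.mem_biUnion.mp he
    exact triEdges_subset_eS G hT (pickE_subset heT)
  refine ⟨P, C, hPsub, hPdis, hCsub, hCcov, ?_⟩
  have hmax : 2 * (triSet G S).card ≤ max ((eS G S).card) (2 * (triSet G S).card) :=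
    le_max_right _ _
  omega

/-- An edge is private if it lies in at most one triangle. -/
def Priv (S : Finset (Sym2 V)) (e : Sym2 V) : Prop :=
  ∀ T₁ ∈ triSet G S, ∀ T₂ ∈ triSet G S, e ∈ triEdges T₁ → e ∈ triEdges T₂ → T₁ = T₂

lemma eS_card_decomp {S : Finset (Sym2 V)} {T₀ : Finset V} (hT₀ : T₀ ∈ triSet G S)
    {W : Finset (Sym2 V)} (hW : eS G S ⊆ eS G (S \ triEdges T₀) ∪ triEdges T₀ ∪ W) :
    (eS G S).card ≤ (eS G (S \ triEdges T₀)).card + 3 + W.card := by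
  calc (eS G S).card ≤ (eS G (S \ triEdges T₀) ∪ triEdges T₀ ∪ W).card :=
        Finset.card_le_card hW
    _ ≤ (eS G (S \ triEdges T₀) ∪ triEdges T₀).card + W.card := Finset.card_union_le _ _
    _ ≤ (eS G (S \ triEdges T₀)).card + (triEdges T₀).card + W.card := by
        have := Finset.card_union_le (eS G (S \ triEdges T₀)) (triEdges T₀)
        omega
    _ = (eS G (S \ triEdges T₀)).card + 3 + W.card := by
        rw [card_triEdges (card3_of_mem_triSet G hT₀)]

lemma case1 {n : ℕ} (IH : ∀ S : Finset (Sym2 V), (triSet G S).card ≤ n → Concl G S)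
    (S : Finset (Sym2 V)) (hS : (triSet G S).card ≤ n + 1)
    (T₀ : Finset V) (hT₀ : T₀ ∈ triSet G S)
    (a b : Sym2 V) (ha : a ∈ triEdges T₀) (hb : b ∈ triEdges T₀) (hab : a ≠ b)
    (hpa : Priv G S a) (hpb : Priv G S b) : Concl G S := by
  have hcard3 : (triEdges T₀).card = 3 := card_triEdges (card3_of_mem_triSet G hT₀)
  have hbea : b ∈ (triEdges T₀).erase a := Finset.mem_erase.mpr ⟨hab.symm, hb⟩
  have hne' : (((triEdges T₀).erase a).erase b).Nonempty := by
    rw [← Finset.card_pos, Finset.card_erase_of_mem hbea, Finset.card_erase_of_mem ha, hcard3]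
    norm_num
  obtain ⟨f, hf⟩ := hne'
  have hfb : f ≠ b := (Finset.mem_erase.mp hf).1
  have hfa : f ≠ a := (Finset.mem_erase.mp (Finset.mem_of_mem_erase hf)).1
  have hfT₀ : f ∈ triEdges T₀ := Finset.mem_of_mem_erase (Finset.mem_of_mem_erase hf)
  have hset : triEdges T₀ = {a, b, f} := by
    refine (Finset.eq_of_subset_of_card_le ?_ ?_).symm
    · intro x hx
      simp only [Finset.mem_insert, Finset.mem_singleton] at hx
      rcases hx with rfl | rfl | rfl <;> assumption
    · rw [hcard3]
      rw [Finset.card_insert_of_notMem, Finset.card_insert_of_notMem, Finset.card_singleton]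
      · simp [hfb.symm]
      · simp [hab, hfa.symm]
  have hcov : ∀ B ∈ destr G S T₀, ∃ h ∈ triEdges B, h ∈ ({f} : Finset (Sym2 V)) := by
    intro B hB
    obtain ⟨h₀, h₀T₀, h₀B⟩ := shared_edge G hB
    have hBtri := destr_subset G hB
    rw [hset] at h₀T₀
    simp only [Finset.mem_insert, Finset.mem_singleton] at h₀T₀
    have hfB : f ∈ triEdges B := by
      rcases h₀T₀ with rfl | rfl | rfl
      · have : B = T₀ := hpa B hBtri T₀ hT₀ h₀B ha
        rw [this]; exact hfT₀
      · have : B = T₀ := hpb B hBtri T₀ hT₀ h₀B hb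
        rw [this]; exact hfT₀
      · exact h₀B
    exact ⟨f, hfB, Finset.mem_singleton_self f⟩
  apply step G IH S T₀ hT₀ hS {f} (Finset.singleton_subset_iff.mpr hfT₀) (by simp) hcov
  have e1 := eS_card_decomp G hT₀ (eS_decomp G (S := S) (T₀ := T₀))
  have e2 := omega_card G hT₀
  have e3 : (triSet G (S \ triEdges T₀)).card = (triSet G S).card - (destr G S T₀).card := by
    rw [triSet_sdiff]
    exact Finset.card_sdiff_of_subset (destr_subset G)
  have e4 : (destr G S T₀).card ≤ (triSet G S).card := Finset.card_le_card (destr_subset G)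
  have e5 : 1 ≤ (destr G S T₀).card := Finset.card_pos.mpr ⟨T₀, mem_destr_self G hT₀⟩
  rw [Finset.card_singleton]
  omega

lemma case2 {n : ℕ} (IH : ∀ S : Finset (Sym2 V), (triSet G S).card ≤ n → Concl G S)
    (S : Finset (Sym2 V)) (hS : (triSet G S).card ≤ n + 1)
    (e₀ : Sym2 V) (T₀ : Finset V) (hT₀ : T₀ ∈ triSet G S) (he₀ : e₀ ∈ triEdges T₀)
    (hpe : Priv G S e₀)
    (hntp : ∀ T ∈ triSet G S, ∀ a ∈ triEdges T, ∀ b ∈ triEdges T,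
      a ≠ b → Priv G S a → ¬ Priv G S b) : Concl G S := by
  obtain ⟨u, huT, v, hvT, huv, rfl⟩ := mem_triEdges_iff.mp he₀
  have hT₀3 : T₀.card = 3 := card3_of_mem_triSet G hT₀
  have hveu : v ∈ T₀.erase u := Finset.mem_erase.mpr ⟨huv.symm, hvT⟩
  have hwne : ((T₀.erase u).erase v).Nonempty := by
    rw [← Finset.card_pos, Finset.card_erase_of_mem hveu, Finset.card_erase_of_mem huT, hT₀3]
    norm_num
  obtain ⟨w, hw⟩ := hwne
  have hwv : w ≠ v := (Finset.mem_erase.mp hw).1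
  have hwu : w ≠ u := (Finset.mem_erase.mp (Finset.mem_of_mem_erase hw)).1
  have hwT : w ∈ T₀ := Finset.mem_of_mem_erase (Finset.mem_of_mem_erase hw)
  have hTeq : T₀ = {u, v, w} := by
    refine (Finset.eq_of_subset_of_card_le ?_ ?_).symm
    · intro x hx
      simp only [Finset.mem_insert, Finset.mem_singleton] at hx
      rcases hx with rfl | rfl | rfl <;> assumption
    · rw [hT₀3]
      rw [Finset.card_insert_of_notMem, Finset.card_insert_of_notMem, Finset.card_singleton]
      · simp [Ne.symm hwv]
      · simp [huv, Ne.symm hwu]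
  have hfT₀ : s(v,w) ∈ triEdges T₀ := mem_triEdges_mk hvT hwT (Ne.symm hwv)
  have hgT₀ : s(u,w) ∈ triEdges T₀ := mem_triEdges_mk huT hwT (Ne.symm hwu)
  have hef : s(u,v) ≠ s(v,w) := by
    intro hc
    rcases Sym2.eq_iff.mp hc with ⟨h1, h2⟩ | ⟨h1, h2⟩
    · exact huv h1
    · exact hwu h1.symm
  have heg : s(u,v) ≠ s(u,w) := by
    intro hc
    rcases Sym2.eq_iff.mp hc with ⟨h1, h2⟩ | ⟨h1, h2⟩
    · exact hwv h2.symm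
    · exact hwu h1.symm
  have hfg : s(v,w) ≠ s(u,w) := by
    intro hc
    rcases Sym2.eq_iff.mp hc with ⟨h1, h2⟩ | ⟨h1, h2⟩
    · exact huv h1.symm
    · exact hwv h1.symm
  have hset : triEdges T₀ = {s(u,v), s(u,w), s(v,w)} := by
    rw [hTeq]
    exact triEdges_explicit huv (Ne.symm hwu) (Ne.symm hwv)
  have hcov : ∀ B ∈ destr G S T₀, ∃ h ∈ triEdges B,
      h ∈ ({s(v,w), s(u,w)} : Finset (Sym2 V)) := by
    intro B hB
    obtain ⟨h₀, h₀T₀, h₀B⟩ := shared_edge G hB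
    have hBtri := destr_subset G hB
    rw [hset] at h₀T₀
    simp only [Finset.mem_insert, Finset.mem_singleton] at h₀T₀
    rcases h₀T₀ with rfl | rfl | rfl
    · have hBeq : B = T₀ := hpe B hBtri T₀ hT₀ h₀B he₀
      refine ⟨s(v,w), ?_, by simp⟩
      rw [hBeq]; exact hfT₀
    · exact ⟨s(u,w), h₀B, by simp⟩
    · exact ⟨s(v,w), h₀B, by simp⟩
  have hCEcard : ({s(v,w), s(u,w)} : Finset (Sym2 V)).card = 2 := by
    rw [Finset.card_insert_of_notMem (by simpa using hfg), Finset.card_singleton]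
  have hCEsub : ({s(v,w), s(u,w)} : Finset (Sym2 V)) ⊆ triEdges T₀ := by
    intro x hx
    simp only [Finset.mem_insert, Finset.mem_singleton] at hx
    rcases hx with rfl | rfl
    exacts [hfT₀, hgT₀]
  -- the key counting estimate
  have hkey2 : (eS G S).card ≤ (eS G (S \ triEdges T₀)).card + 2 * (destr G S T₀).card := by
    by_cases hover : ∃ B ∈ destr G S T₀, ∃ Cc ∈ destr G S T₀, B ≠ Cc ∧
        ((triEdges B ∩ triEdges Cc) \ triEdges T₀).Nonempty
    · -- an edge shared by two destroyed triangles, off T₀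
      obtain ⟨B, hB, Cc, hCc, hBC, h₀, hh₀⟩ := hover
      rw [Finset.mem_sdiff, Finset.mem_inter] at hh₀
      have h₀Cc : h₀ ∈ triEdges Cc \ triEdges T₀ := Finset.mem_sdiff.mpr ⟨hh₀.1.2, hh₀.2⟩
      have hT₀Cc : T₀ ≠ Cc := by
        rintro rfl
        exact hh₀.2 hh₀.1.2
      have hT₀eCc : T₀ ∈ (destr G S T₀).erase Cc :=
        Finset.mem_erase.mpr ⟨hT₀Cc, mem_destr_self G hT₀⟩
      set R := ((destr G S T₀).erase Cc).biUnion (fun B' => triEdges B' \ triEdges T₀) with hR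
      have hΩeq : (destr G S T₀).biUnion (fun B' => triEdges B' \ triEdges T₀)
          = (triEdges Cc \ triEdges T₀) ∪ R := by
        ext x
        simp only [hR, Finset.mem_biUnion, Finset.mem_union, Finset.mem_erase]
        constructor
        · rintro ⟨B', hB', hx⟩
          by_cases hBCc : B' = Cc
          · subst hBCc; exact Or.inl hx
          · exact Or.inr ⟨B', ⟨hBCc, hB'⟩, hx⟩
        · rintro (hx | ⟨B', ⟨_, hB'⟩, hx⟩)
          · exact ⟨Cc, hCc, hx⟩
          · exact ⟨B', hB', hx⟩
      have hh₀R : h₀ ∈ R :=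
        Finset.mem_biUnion.mpr ⟨B, Finset.mem_erase.mpr ⟨hBC, hB⟩,
          Finset.mem_sdiff.mpr ⟨hh₀.1.1, hh₀.2⟩⟩
      have hXR : ((triEdges Cc \ triEdges T₀) \ R).card ≤ 1 := by
        have hsub : (triEdges Cc \ triEdges T₀) \ R ⊆ (triEdges Cc \ triEdges T₀).erase h₀ := by
          intro x hx
          rw [Finset.mem_sdiff] at hx
          refine Finset.mem_erase.mpr ⟨?_, hx.1⟩
          rintro rfl
          exact hx.2 hh₀R
        calc ((triEdges Cc \ triEdges T₀) \ R).card
            ≤ ((triEdges Cc \ triEdges T₀).erase h₀).card := Finset.card_le_card hsub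
          _ = (triEdges Cc \ triEdges T₀).card - 1 := Finset.card_erase_of_mem h₀Cc
          _ ≤ 1 := by
              have := sdiff_tri_card_le_two G hCc
              omega
      have hRcard : R.card ≤ 2 * ((destr G S T₀).card - 2) := by
        calc R.card ≤ ∑ B' ∈ (destr G S T₀).erase Cc, (triEdges B' \ triEdges T₀).card :=
              Finset.card_biUnion_le
          _ = ∑ B' ∈ ((destr G S T₀).erase Cc).erase T₀, (triEdges B' \ triEdges T₀).card
              + (triEdges T₀ \ triEdges T₀).card :=
              (Finset.sum_erase_add _ _ hT₀eCc).symm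
          _ = ∑ B' ∈ ((destr G S T₀).erase Cc).erase T₀, (triEdges B' \ triEdges T₀).card := by
              simp
          _ ≤ (((destr G S T₀).erase Cc).erase T₀).card * 2 := by
              refine Finset.sum_le_card_nsmul _ _ 2 ?_
              intro B' hB'
              exact sdiff_tri_card_le_two G
                (Finset.mem_of_mem_erase (Finset.mem_of_mem_erase hB'))
          _ ≤ 2 * ((destr G S T₀).card - 2) := by
              rw [Finset.card_erase_of_mem hT₀eCc, Finset.card_erase_of_mem hCc]
              omega
      have hΩcard : ((destr G S T₀).biUnion (fun B' => triEdges B' \ triEdges T₀)).card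
          ≤ 1 + 2 * ((destr G S T₀).card - 2) := by
        rw [hΩeq]
        have := Finset.card_sdiff_add_card (triEdges Cc \ triEdges T₀) R
        omega
      have e1 := eS_card_decomp G hT₀ (eS_decomp G (S := S) (T₀ := T₀))
      have hs2 : 2 ≤ (destr G S T₀).card :=
        Finset.one_lt_card.mpr ⟨B, hB, Cc, hCc, hBC⟩
      omega
    · -- no such shared edge: dying edges are private, at most one per destroyed triangle
      set Dy := ((eS G S \ eS G (S \ triEdges T₀)) \ triEdges T₀) with hDy
      have hdecomp : eS G S ⊆ eS G (S \ triEdges T₀) ∪ triEdges T₀ ∪ Dy := by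
        intro h hh
        by_cases h1 : h ∈ eS G (S \ triEdges T₀)
        · exact Finset.mem_union_left _ (Finset.mem_union_left _ h1)
        by_cases h2 : h ∈ triEdges T₀
        · exact Finset.mem_union_left _ (Finset.mem_union_right _ h2)
        · exact Finset.mem_union_right _
            (Finset.mem_sdiff.mpr ⟨Finset.mem_sdiff.mpr ⟨hh, h1⟩, h2⟩)
      have hDyprop : ∀ h ∈ Dy, ∃ B ∈ (destr G S T₀).erase T₀, h ∈ triEdges B ∧ Priv G S h := by
        intro h hh
        rw [hDy, Finset.mem_sdiff, Finset.mem_sdiff] at hh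
        obtain ⟨⟨hhE, hhE'⟩, hhT₀⟩ := hh
        obtain ⟨B, hBtri, hhB⟩ := (mem_eS_iff G).mp hhE
        have hBD : ∀ T ∈ triSet G S, h ∈ triEdges T → T ∈ destr G S T₀ := by
          intro T hT hhT
          by_contra hc
          have hT' : T ∈ triSet G (S \ triEdges T₀) := by
            rw [triSet_sdiff, Finset.mem_sdiff]
            exact ⟨hT, hc⟩
          exact hhE' ((mem_eS_iff G).mpr ⟨T, hT', hhT⟩)
        have hBDD := hBD B hBtri hhB
        have hBne : B ≠ T₀ := fun hc => hhT₀ (hc ▸ hhB)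
        refine ⟨B, Finset.mem_erase.mpr ⟨hBne, hBDD⟩, hhB, ?_⟩
        intro T₁ hT₁ T₂ hT₂ m₁ m₂
        by_contra hne
        have d₁ := hBD T₁ hT₁ m₁
        have d₂ := hBD T₂ hT₂ m₂
        exact hover ⟨T₁, d₁, T₂, d₂, hne,
          ⟨h, Finset.mem_sdiff.mpr ⟨Finset.mem_inter.mpr ⟨m₁, m₂⟩, hhT₀⟩⟩⟩
      have hDycard : Dy.card ≤ (destr G S T₀).card - 1 := by
        have hsub : Dy ⊆ ((destr G S T₀).erase T₀).biUnion (fun B => triEdges B ∩ Dy) := by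
          intro h hh
          obtain ⟨B, hBmem, hhB, _⟩ := hDyprop h hh
          exact Finset.mem_biUnion.mpr ⟨B, hBmem, Finset.mem_inter.mpr ⟨hhB, hh⟩⟩
        calc Dy.card ≤ (((destr G S T₀).erase T₀).biUnion (fun B => triEdges B ∩ Dy)).card :=
              Finset.card_le_card hsub
          _ ≤ ∑ B ∈ (destr G S T₀).erase T₀, (triEdges B ∩ Dy).card := Finset.card_biUnion_le
          _ ≤ ((destr G S T₀).erase T₀).card * 1 := by
              refine Finset.sum_le_card_nsmul _ _ 1 ?_
              intro B hB
              rw [Finset.card_le_one]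
              intro x hx y hy
              by_contra hxy
              rw [Finset.mem_inter] at hx hy
              obtain ⟨Bx, _, _, hpx⟩ := hDyprop x hx.2
              obtain ⟨By, _, _, hpy⟩ := hDyprop y hy.2
              exact hntp B (destr_subset G (Finset.mem_of_mem_erase hB))
                x hx.1 y hy.1 hxy hpx hpy
          _ ≤ (destr G S T₀).card - 1 := by
              rw [Finset.card_erase_of_mem (mem_destr_self G hT₀)]
              omega
      have hs2 : 2 ≤ (destr G S T₀).card := by
        have hpf : ¬ Priv G S (s(v,w)) :=
          hntp T₀ hT₀ (s(u,v)) he₀ (s(v,w)) hfT₀ hef hpe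
        rw [Priv] at hpf
        push_neg at hpf
        obtain ⟨T₁, hT₁, T₂, hT₂, m₁, m₂, hne⟩ := hpf
        have d₁ : T₁ ∈ destr G S T₀ := (mem_destr_iff G).mpr
          ⟨hT₁, Finset.not_disjoint_iff.mpr ⟨s(v,w), hfT₀, m₁⟩⟩
        have d₂ : T₂ ∈ destr G S T₀ := (mem_destr_iff G).mpr
          ⟨hT₂, Finset.not_disjoint_iff.mpr ⟨s(v,w), hfT₀, m₂⟩⟩
        exact Finset.one_lt_card.mpr ⟨T₁, d₁, T₂, d₂, hne⟩
      have e1 := eS_card_decomp G hT₀ hdecomp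
      omega
  apply step G IH S T₀ hT₀ hS _ hCEsub (le_of_eq hCEcard) hcov
  have e3 : (triSet G (S \ triEdges T₀)).card = (triSet G S).card - (destr G S T₀).card := by
    rw [triSet_sdiff]
    exact Finset.card_sdiff_of_subset (destr_subset G)
  have e4 : (destr G S T₀).card ≤ (triSet G S).card := Finset.card_le_card (destr_subset G)
  have e5 : 1 ≤ (destr G S T₀).card := Finset.card_pos.mpr ⟨T₀, mem_destr_self G hT₀⟩
  rw [hCEcard]
  omega

lemma main (n : ℕ) : ∀ S : Finset (Sym2 V), (triSet G S).card ≤ n → Concl G S := by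
  induction n with
  | zero =>
    intro S hS
    have ht : triSet G S = ∅ := Finset.card_eq_zero.mp (Nat.le_zero.mp hS)
    refine ⟨∅, ∅, by simp, by simp, by simp, ?_, ?_⟩
    · intro T hT
      rw [ht] at hT
      exact absurd hT (Finset.notMem_empty _)
    · simp only [Finset.card_empty, Nat.mul_zero, Nat.zero_add]
      exact le_max_left _ _
  | succ n IH =>
    intro S hS
    by_cases hmin2 : ∀ h ∈ eS G S, ∃ T₁ ∈ triSet G S, ∃ T₂ ∈ triSet G S,
        T₁ ≠ T₂ ∧ h ∈ triEdges T₁ ∧ h ∈ triEdges T₂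
    · exact case3 G S hmin2
    · push_neg at hmin2
      obtain ⟨e₀, he₀E, huniq⟩ := hmin2
      have hpe : Priv G S e₀ := by
        intro T₁ hT₁ T₂ hT₂ m₁ m₂
        by_contra hne
        exact huniq T₁ hT₁ T₂ hT₂ hne m₁ m₂
      by_cases htp : ∃ T ∈ triSet G S, ∃ a ∈ triEdges T, ∃ b ∈ triEdges T,
          a ≠ b ∧ Priv G S a ∧ Priv G S b
      · obtain ⟨T, hT, a, ha, b, hb, hab, hpa, hpb⟩ := htp
        exact case1 G IH S hS T hT a b ha hb hab hpa hpb
      · push_neg at htp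
        obtain ⟨T₀, hT₀, he₀⟩ := (mem_eS_iff G).mp he₀E
        exact case2 G IH S hS e₀ T₀ hT₀ he₀ hpe htp

end TuzaAux

/-- If `G` is irreducible (every edge lies in a triangle) and |E| ≥ 2|T_G|,
then τ_t(G) ≤ 2·ν_t(G). -/
theorem tauT_le_two_nuT_of_irreducible {V : Type*} [Fintype V] [DecidableEq V]
    (G : SimpleGraph V)
    (hirr : ∀ e ∈ G.edgeSet, ∃ t : Finset V, IsTriangle G t ∧ e ∈ triEdges t)
    (h : numEdges G ≥ 2 * numTris G) :
    tauT G ≤ 2 * nuT G := by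
  classical
  set S₀ := G.edgeFinset with hS₀
  have htriS : ∀ t : Finset V, t ∈ TuzaAux.triSet G S₀ ↔ IsTriangle G t := by
    intro t
    rw [TuzaAux.mem_triSet_iff]
    constructor
    · exact And.left
    · intro ht
      refine ⟨ht, ?_⟩
      intro e he
      rw [hS₀, SimpleGraph.mem_edgeFinset]
      exact TuzaAux.edge_mem_edgeSet G ht he
  have heS : TuzaAux.eS G S₀ = S₀ := by
    apply Finset.Subset.antisymm (TuzaAux.eS_subset G)
    intro e he
    rw [hS₀, SimpleGraph.mem_edgeFinset] at he
    obtain ⟨t, ht, het⟩ := hirr e he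
    exact (TuzaAux.mem_eS_iff G).mpr ⟨t, (htriS t).mpr ht, het⟩
  have hnumE : numEdges G = S₀.card := by
    rw [numEdges, ← SimpleGraph.coe_edgeFinset, Set.ncard_coe_finset]
  have hnumT : numTris G = (TuzaAux.triSet G S₀).card := by
    rw [numTris]
    have heq : {t : Finset V | IsTriangle G t} = ↑(TuzaAux.triSet G S₀) := by
      ext t
      simp [htriS t]
    rw [heq, Set.ncard_coe_finset]
  obtain ⟨P, C, hPsub, hPdis, hCsub, hCcov, hbound⟩ :=
    TuzaAux.main G ((TuzaAux.triSet G S₀).card) S₀ le_rfl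
  have hCcard : C.card ≤ 2 * P.card := by
    rw [heS] at hbound
    have hmax : max S₀.card (2 * (TuzaAux.triSet G S₀).card) = S₀.card := by
      rw [max_eq_left]
      rw [← hnumE, ← hnumT]
      exact h
    rw [hmax] at hbound
    omega
  have h1 : tauT G ≤ C.card := by
    apply Nat.sInf_le
    refine ⟨C, ⟨?_, ?_⟩, rfl⟩
    · intro e he
      have hmem := TuzaAux.eS_subset G (hCsub he)
      rw [hS₀, SimpleGraph.mem_edgeFinset] at hmem
      exact hmem
    · intro t ht
      exact hCcov t ((htriS t).mpr ht)
  have h2 : P.card ≤ nuT G := by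
    apply le_csSup
    · refine ⟨Fintype.card (Finset V), ?_⟩
      rintro m ⟨P', hP', rfl⟩
      exact Finset.card_le_univ P'
    · exact ⟨P, ⟨fun t ht => ((htriS t).mp (hPsub ht)), hPdis⟩, rfl⟩
  omega
end
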